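/- arXiv:2509.04664 — 10 statements merged into one kernel-verified Lean document; each statement's English description precedes it below -/
import Mathlib

section
/- For any error-free training distribution p (i.e. p(V) = 1) and any base model p̂, the generative error rate satisfies err ≥ 2·erriv − (max_c |V_c|)/(min_c |E_c|) − δ. -/
/-!
Fix a prompt `c` and the threshold `t = 1 / min |E|`, so that `1 / |E_c| ≤ t`. An erroneous
response above the threshold has `p̂`-mass above `1 / |E_c|`, so the uniform-error half of `D`
gives the false positives less mass than `p̂` does. A valid response below the threshold has
`p̂`-mass at most `t`, so `p̂` puts at most `|V_c| t` on the false negatives; as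
`p(V_c) = 1 = p̂(R_c)`, their `p`-mass is at most that plus `p̂(E_c)` plus the excess `p̂ - p`
on the above-threshold set. Averaging over `μ` gives the bound.
-/

open Finset

open scoped Classical

namespace Finset

variable {R : Type*} {s : Finset R} {t : ℝ}

lemma sum_filter_not_lt_le_card_mul (ht : 0 ≤ t) (f : R → ℝ) :
    ∑ r ∈ s with ¬ f r > t, f r ≤ #s * t :=
  calc ∑ r ∈ s with ¬ f r > t, f r
      ≤ #{r ∈ s | ¬ f r > t} * t := by
        simpa using sum_le_card_nsmul _ f t fun r hr => not_lt.mp (mem_filter.mp hr).2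
    _ ≤ #s * t := by gcongr; exact filter_subset _ s

lemma card_filter_lt_mul_inv_le_sum (ht : (#s : ℝ)⁻¹ ≤ t) (f : R → ℝ) :
    #{r ∈ s | f r > t} * (#s : ℝ)⁻¹ ≤ ∑ r ∈ s with f r > t, f r := by
  simpa using card_nsmul_le_sum _ f _ fun r hr => ht.trans (mem_filter.mp hr).2.le

end Finset

/-- The density of `2 • D(c, ·) / μ c` on the responses that the classifier with threshold `t`
gets wrong, when `q = p(· | c)`, `V = V_c` and `E = E_c`. -/
noncomputable def misclassWeight {R : Type*} (V E : Finset R) (q qhat : R → ℝ) (t : ℝ) (r : R) :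
    ℝ :=
  if (r ∈ V ∧ ¬ qhat r > t) ∨ (r ∈ E ∧ qhat r > t)
    then q r + (if r ∈ E then (#E : ℝ)⁻¹ else 0) else 0

theorem sum_misclassWeight_le {R : Type*} {V E : Finset R} {q qhat : R → ℝ} {t : ℝ}
    (hVE : Disjoint V E) (hqV : ∑ r ∈ V, q r = 1) (hqE : ∀ r ∈ E, q r = 0)
    (hqhat : ∑ r ∈ V ∪ E, qhat r = 1) (ht : (#E : ℝ)⁻¹ ≤ t) :
    ∑ r ∈ V ∪ E, misclassWeight V E q qhat t r
      ≤ ∑ r ∈ E, qhat r + #V * t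
        + ∑ r ∈ V ∪ E, if qhat r > t then qhat r - q r else 0 := by
  have ht0 : 0 ≤ t := le_trans (by positivity) ht
  have hmisV : ∑ r ∈ V, misclassWeight V E q qhat t r
      = ∑ r ∈ V with ¬ qhat r > t, q r := by
    rw [sum_filter]
    refine sum_congr rfl fun r hr => ?_
    simp [misclassWeight, hr, disjoint_left.mp hVE hr]
  have hmisE : ∑ r ∈ E, misclassWeight V E q qhat t r
      = #{r ∈ E | qhat r > t} * (#E : ℝ)⁻¹ := by
    rw [← nsmul_eq_mul, ← sum_const, sum_filter]
    refine sum_congr rfl fun r hr => ?_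
    simp [misclassWeight, hr, disjoint_right.mp hVE hr, hqE r hr]
  have hgapE : ∑ r ∈ E, (if qhat r > t then qhat r - q r else 0)
      = ∑ r ∈ E with qhat r > t, qhat r := by
    rw [sum_filter]
    exact sum_congr rfl fun r hr => by simp [hqE r hr]
  rw [sum_union hVE, sum_union hVE, hmisV, hmisE, hgapE, ← sum_filter, sum_sub_distrib]
  rw [sum_union hVE] at hqhat
  linarith [sum_filter_add_sum_filter_not V (fun r => qhat r > t) q,
    sum_filter_add_sum_filter_not V (fun r => qhat r > t) qhat,
    sum_filter_not_lt_le_card_mul (s := V) ht0 qhat, card_filter_lt_mul_inv_le_sum ht qhat]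

theorem stmt0_general {C R : Type} [Fintype C] [Nonempty C]
    (μ : C → ℝ) (hμ0 : ∀ c, 0 ≤ μ c) (hμ1 : ∑ c, μ c = 1)
    (Rset Vset Eset : C → Finset R)
    (hEne : ∀ c, (Eset c).Nonempty)
    (hdisj : ∀ c, Disjoint (Vset c) (Eset c))
    (hpart : ∀ c, Vset c ∪ Eset c = Rset c)
    (p phat : C → R → ℝ)
    (hp0 : ∀ c r, 0 ≤ p c r) (hp1 : ∀ c, ∑ r ∈ Rset c, p c r = 1)
    (hphat1 : ∀ c, ∑ r ∈ Rset c, phat c r = 1)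
    -- error-free training distribution: p(E_c | c) = 0 for every prompt c
    (herrfree : ∀ c, ∑ r ∈ Eset c, p c r = 0) :
    -- min_c |E_c| and max_c |V_c|
    let minE : ℕ := Finset.univ.inf' Finset.univ_nonempty (fun c => (Eset c).card)
    let maxV : ℕ := Finset.univ.sup' Finset.univ_nonempty (fun c => (Vset c).card)
    -- the mixture distribution D : with prob 1/2 draw (c,r) ∼ p, with prob 1/2
    -- draw c ∼ μ and r uniformly from E_c
    let D : C → R → ℝ := fun c r => μ c * p c r / 2 +
      (if r ∈ Eset c then μ c / (2 * ((Eset c).card : ℝ)) else 0)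
    -- generative error rate err = phat(E)
    let err : ℝ := ∑ c, μ c * ∑ r ∈ Eset c, phat c r
    -- misclassification rate of the classifier `f̂(c,r) = + iff phat(r|c) > 1/min_c |E_c|`
    let erriv : ℝ := ∑ c, ∑ r ∈ Rset c,
      if (r ∈ Vset c ∧ ¬ (phat c r > 1 / (minE : ℝ))) ∨
         (r ∈ Eset c ∧ phat c r > 1 / (minE : ℝ)) then D c r else 0
    -- calibration gap δ = |phat(A) − p(A)| for the above-threshold set A
    let δ : ℝ := |∑ c, ∑ r ∈ Rset c,
      if phat c r > 1 / (minE : ℝ) then μ c * (phat c r - p c r) else 0|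
    err ≥ 2 * erriv - (maxV : ℝ) / (minE : ℝ) - δ := by
  intro minE maxV D err erriv δ
  set t : ℝ := 1 / (minE : ℝ)
  set L : C → ℝ := fun c =>
    ∑ r ∈ Rset c, misclassWeight (Vset c) (Eset c) (p c) (phat c) t r
  set G : C → ℝ := fun c => ∑ r ∈ Rset c, if phat c r > t then phat c r - p c r else 0
  have hminE : (0 : ℝ) < minE := by
    have : 1 ≤ minE := le_inf' _ _ fun c _ => (hEne c).card_pos
    exact_mod_cast this
  have hL : ∀ c, L c ≤ ∑ r ∈ Eset c, phat c r + maxV / minE + G c := fun c => by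
    have hqE : ∀ r ∈ Eset c, p c r = 0 :=
      (sum_eq_zero_iff_of_nonneg fun r _ => hp0 c r).mp (herrfree c)
    have hqV : ∑ r ∈ Vset c, p c r = 1 := by
      rw [← hp1 c, ← hpart c, sum_union (hdisj c), herrfree c, add_zero]
    have ht : (#(Eset c) : ℝ)⁻¹ ≤ t := by
      refine (inv_anti₀ hminE ?_).trans_eq (one_div _).symm
      exact_mod_cast inf'_le _ (mem_univ c)
    have hV : (#(Vset c) : ℝ) * t ≤ maxV / minE := by
      rw [← mul_one_div]; gcongr; exact_mod_cast le_sup' (fun c => #(Vset c)) (mem_univ c)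
    have hbound := sum_misclassWeight_le (hdisj c) hqV hqE (hpart c ▸ hphat1 c) ht
    simp only [L, G, ← hpart c]
    linarith
  have herriv : 2 * erriv = ∑ c, μ c * L c := by
    simp only [erriv, D, L, misclassWeight, mul_sum]
    refine sum_congr rfl fun c _ => sum_congr rfl fun r _ => ?_
    split_ifs <;> ring
  have hδ : ∑ c, μ c * G c ≤ δ := by
    simpa only [δ, G, mul_sum, mul_ite, mul_zero] using le_abs_self _
  calc 2 * erriv - maxV / minE - δ
      ≤ ∑ c, μ c * (∑ r ∈ Eset c, phat c r + maxV / minE + G c) - maxV / minE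
          - ∑ c, μ c * G c := by
        rw [herriv]; gcongr with c; exacts [hμ0 c, hL c]
    _ = err := by simp only [err, mul_add, sum_add_distrib, ← sum_mul, hμ1]; ring

/-- (Theorem 1 of the paper, with prompts.)
Prompts `c : C` are drawn from `μ`; for each prompt the plausible responses `Rset c`
are partitioned into nonempty valid responses `Vset c` and erroneous responses `Eset c`.
`p(·|c)` is an error-free training conditional distribution and `phat(·|c)` an arbitrary
base model.  Then `err ≥ 2·erriv − (max_c |V_c|)/(min_c |E_c|) − δ`. -/
theorem stmt0 {C R : Type} [Fintype C] [Nonempty C] [Fintype R]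
    (μ : C → ℝ) (hμ0 : ∀ c, 0 ≤ μ c) (hμ1 : ∑ c, μ c = 1)
    (Rset Vset Eset : C → Finset R)
    (hVne : ∀ c, (Vset c).Nonempty) (hEne : ∀ c, (Eset c).Nonempty)
    (hdisj : ∀ c, Disjoint (Vset c) (Eset c))
    (hpart : ∀ c, Vset c ∪ Eset c = Rset c)
    (p phat : C → R → ℝ)
    (hp0 : ∀ c r, 0 ≤ p c r) (hp1 : ∀ c, ∑ r ∈ Rset c, p c r = 1)
    (hpsupp : ∀ c, ∀ r ∉ Rset c, p c r = 0)
    (hphat0 : ∀ c r, 0 ≤ phat c r) (hphat1 : ∀ c, ∑ r ∈ Rset c, phat c r = 1)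
    (hphatsupp : ∀ c, ∀ r ∉ Rset c, phat c r = 0)
    -- error-free training distribution: p(E_c | c) = 0 for every prompt c
    (herrfree : ∀ c, ∑ r ∈ Eset c, p c r = 0) :
    -- min_c |E_c| and max_c |V_c|
    let minE : ℕ := Finset.univ.inf' Finset.univ_nonempty (fun c => (Eset c).card)
    let maxV : ℕ := Finset.univ.sup' Finset.univ_nonempty (fun c => (Vset c).card)
    -- the mixture distribution D : with prob 1/2 draw (c,r) ∼ p, with prob 1/2
    -- draw c ∼ μ and r uniformly from E_c
    let D : C → R → ℝ := fun c r => μ c * p c r / 2 +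
      (if r ∈ Eset c then μ c / (2 * ((Eset c).card : ℝ)) else 0)
    -- generative error rate err = phat(E)
    let err : ℝ := ∑ c, μ c * ∑ r ∈ Eset c, phat c r
    -- misclassification rate of the classifier `f̂(c,r) = + iff phat(r|c) > 1/min_c |E_c|`
    let erriv : ℝ := ∑ c, ∑ r ∈ Rset c,
      if (r ∈ Vset c ∧ ¬ (phat c r > 1 / (minE : ℝ))) ∨
         (r ∈ Eset c ∧ phat c r > 1 / (minE : ℝ)) then D c r else 0
    -- calibration gap δ = |phat(A) − p(A)| for the above-threshold set A
    let δ : ℝ := |∑ c, ∑ r ∈ Rset c,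
      if phat c r > 1 / (minE : ℝ) then μ c * (phat c r - p c r) else 0|
    err ≥ 2 * erriv - (maxV : ℝ) / (minE : ℝ) - δ :=
  stmt0_general μ hμ0 hμ1 Rset Vset Eset hEne hdisj hpart p phat hp0 hp1 hphat1 herrfree
end

section
/- For any error-free training distribution p (i.e. p(V) = 1) and any base model p̂, the generative error rate satisfies err ≥ 2·erriv − |V|/|E| − δ. -/
open Finset

open scoped Classical

/-- (Corollary 1 of the paper, no prompts.)
`X` is a finite nonempty set partitioned into nonempty disjoint sets of errors `Eset`
and valid examples `Vset`.  `p` is an error-free training distribution (`p(V) = 1`),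
`phat` any base model.  Then `err ≥ 2·erriv − |V|/|E| − δ`. -/
theorem stmt1 {X : Type} [Fintype X] [Nonempty X]
    (Vset Eset : Finset X)
    (hVne : Vset.Nonempty) (hEne : Eset.Nonempty)
    (hdisj : Disjoint Vset Eset)
    (hunion : Vset ∪ Eset = Finset.univ)
    (p phat : X → ℝ)
    (hp0 : ∀ x, 0 ≤ p x) (hp1 : ∑ x, p x = 1)
    (hphat0 : ∀ x, 0 ≤ phat x) (hphat1 : ∑ x, phat x = 1)
    (hpV : ∑ x ∈ Vset, p x = 1) :
    -- the mixture distribution D : half `p` (supported on valid examples),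
    -- half uniform over the errors
    let D : X → ℝ := fun x => (if x ∈ Vset then p x / 2 else 0) +
      (if x ∈ Eset then 1 / (2 * (Eset.card : ℝ)) else 0)
    -- generative error rate
    let err : ℝ := ∑ x ∈ Eset, phat x
    -- misclassification rate of the induced classifier `f̂(x) = + iff phat x > 1/|E|`
    let erriv : ℝ := ∑ x ∈ Finset.univ.filter
      (fun x => (x ∈ Vset ∧ ¬ (phat x > 1 / (Eset.card : ℝ))) ∨
        (x ∈ Eset ∧ phat x > 1 / (Eset.card : ℝ))), D x
    -- the above-threshold set A and the calibration gap δ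
    let A : Finset X := Finset.univ.filter (fun x => phat x > 1 / (Eset.card : ℝ))
    let δ : ℝ := |(∑ x ∈ A, phat x) - (∑ x ∈ A, p x)|
    err ≥ 2 * erriv - (Vset.card : ℝ) / (Eset.card : ℝ) - δ := by
  intro D err erriv A δ
  have hc : (0:ℝ) < (Eset.card : ℝ) := by exact_mod_cast hEne.card_pos
  set c : ℝ := (Eset.card : ℝ) with hcdef
  -- p vanishes on Eset
  have hsplit : ∀ g : X → ℝ, ∑ x, g x = ∑ x ∈ Vset, g x + ∑ x ∈ Eset, g x := by
    intro g
    rw [← Finset.sum_union hdisj, hunion]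
  have hsumE : ∑ x ∈ Eset, p x = 0 := by
    have := hsplit p
    rw [hp1, hpV] at this
    linarith
  have hpE : ∀ x ∈ Eset, p x = 0 :=
    (Finset.sum_eq_zero_iff_of_nonneg (fun x _ => hp0 x)).1 hsumE
  set P : X → Prop := fun x => phat x > 1 / c with hP
  -- membership facts
  have hVnE : ∀ x ∈ Vset, x ∉ Eset := fun x hx =>
    Finset.disjoint_left.1 hdisj hx
  have hEnV : ∀ x ∈ Eset, x ∉ Vset := fun x hx =>
    Finset.disjoint_right.1 hdisj hx
  -- compute erriv
  have hfilters : Finset.univ.filter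
      (fun x => (x ∈ Vset ∧ ¬ P x) ∨ (x ∈ Eset ∧ P x)) =
      (Vset.filter fun x => ¬ P x) ∪ (Eset.filter P) := by
    ext x
    simp only [Finset.mem_filter, Finset.mem_union, Finset.mem_univ, true_and]
  have hdisj2 : Disjoint (Vset.filter fun x => ¬ P x) (Eset.filter P) :=
    Finset.disjoint_filter_filter hdisj
  have herriv : erriv = (∑ x ∈ Vset.filter (fun x => ¬ P x), p x) / 2
      + ((Eset.filter P).card : ℝ) / (2 * c) := by
    show (∑ x ∈ Finset.univ.filter
      (fun x => (x ∈ Vset ∧ ¬ P x) ∨ (x ∈ Eset ∧ P x)), D x) = _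
    rw [hfilters, Finset.sum_union hdisj2]
    have h1 : ∑ x ∈ Vset.filter (fun x => ¬ P x), D x =
        (∑ x ∈ Vset.filter (fun x => ¬ P x), p x) / 2 := by
      rw [Finset.sum_div]
      apply Finset.sum_congr rfl
      intro x hx
      have hxV : x ∈ Vset := (Finset.mem_filter.1 hx).1
      show (if x ∈ Vset then p x / 2 else 0) +
        (if x ∈ Eset then 1 / (2 * c) else 0) = p x / 2
      rw [if_pos hxV, if_neg (hVnE x hxV), add_zero]
    have h2 : ∑ x ∈ Eset.filter P, D x =
        ((Eset.filter P).card : ℝ) / (2 * c) := by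
      have : ∀ x ∈ Eset.filter P, D x = 1 / (2 * c) := by
        intro x hx
        have hxE : x ∈ Eset := (Finset.mem_filter.1 hx).1
        show (if x ∈ Vset then p x / 2 else 0) +
          (if x ∈ Eset then 1 / (2 * c) else 0) = 1 / (2 * c)
        rw [if_neg (hEnV x hxE), if_pos hxE, zero_add]
      rw [Finset.sum_congr rfl this, Finset.sum_const, nsmul_eq_mul]
      ring
    rw [h1, h2]
  -- A splits
  have hA : A = (Vset.filter P) ∪ (Eset.filter P) := by
    rw [← Finset.filter_union, hunion]
  have hdisjA : Disjoint (Vset.filter P) (Eset.filter P) :=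
    Finset.disjoint_filter_filter hdisj
  have hAp : ∑ x ∈ A, p x = ∑ x ∈ Vset.filter P, p x := by
    rw [hA, Finset.sum_union hdisjA]
    have : ∑ x ∈ Eset.filter P, p x = 0 :=
      Finset.sum_eq_zero fun x hx => hpE x (Finset.mem_filter.1 hx).1
    rw [this, add_zero]
  have hAphat : ∑ x ∈ A, phat x =
      ∑ x ∈ Vset.filter P, phat x + ∑ x ∈ Eset.filter P, phat x := by
    rw [hA, Finset.sum_union hdisjA]
  -- splits by filter
  have hVp : ∑ x ∈ Vset.filter P, p x + ∑ x ∈ Vset.filter (fun x => ¬ P x), p x = 1 := by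
    rw [Finset.sum_filter_add_sum_filter_not, hpV]
  have hVphat : ∑ x ∈ Vset.filter P, phat x
      + ∑ x ∈ Vset.filter (fun x => ¬ P x), phat x = ∑ x ∈ Vset, phat x :=
    Finset.sum_filter_add_sum_filter_not _ _ _
  have hEphat : ∑ x ∈ Eset.filter P, phat x
      + ∑ x ∈ Eset.filter (fun x => ¬ P x), phat x = ∑ x ∈ Eset, phat x :=
    Finset.sum_filter_add_sum_filter_not _ _ _
  have htot : ∑ x ∈ Vset, phat x + ∑ x ∈ Eset, phat x = 1 := by
    rw [← hsplit phat, hphat1]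
  -- bound: below-threshold valid mass
  have hVbound : ∑ x ∈ Vset.filter (fun x => ¬ P x), phat x ≤ (Vset.card : ℝ) / c := by
    calc ∑ x ∈ Vset.filter (fun x => ¬ P x), phat x
        ≤ ∑ x ∈ Vset.filter (fun x => ¬ P x), 1 / c := by
          apply Finset.sum_le_sum
          intro x hx
          have := (Finset.mem_filter.1 hx).2
          simp only [hP, not_lt] at this
          exact this
      _ = ((Vset.filter (fun x => ¬ P x)).card : ℝ) * (1 / c) := by
          rw [Finset.sum_const, nsmul_eq_mul]
      _ ≤ (Vset.card : ℝ) * (1 / c) := by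
          apply mul_le_mul_of_nonneg_right _ (by positivity)
          exact_mod_cast Finset.card_filter_le _ _
      _ = (Vset.card : ℝ) / c := by ring
  -- bound: above-threshold error mass
  have hEbound : ((Eset.filter P).card : ℝ) / c ≤ ∑ x ∈ Eset.filter P, phat x := by
    calc ((Eset.filter P).card : ℝ) / c
        = ∑ x ∈ Eset.filter P, 1 / c := by
          rw [Finset.sum_const, nsmul_eq_mul]; ring
      _ ≤ ∑ x ∈ Eset.filter P, phat x := by
          apply Finset.sum_le_sum
          intro x hx
          exact le_of_lt (Finset.mem_filter.1 hx).2
  have hδ : (∑ x ∈ A, phat x) - (∑ x ∈ A, p x) ≤ δ := le_abs_self _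
  have hEphat0 : 0 ≤ ∑ x ∈ Eset.filter (fun x => ¬ P x), phat x :=
    Finset.sum_nonneg fun x _ => hphat0 x
  show ∑ x ∈ Eset, phat x ≥ 2 * erriv - (Vset.card : ℝ) / c - δ
  have h2c : 2 * erriv = (∑ x ∈ Vset.filter (fun x => ¬ P x), p x)
      + ((Eset.filter P).card : ℝ) / c := by
    rw [herriv]
    field_simp
  linarith
end

section
/- Below the threshold, writing B := X \ A, the base model's error mass satisfies p̂(B \ V) ≥ 2·D(B ∩ V) − (max_c |V_c|)/(min_c |E_c|) − δ. -/
open Finset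

open scoped Classical

theorem stmt3_aux {C R : Type} [Fintype C] [Nonempty C] [Fintype R]
    (μ : C → ℝ) (hμ0 : ∀ c, 0 ≤ μ c) (hμ1 : ∑ c, μ c = 1)
    (Rset Vset Eset : C → Finset R)
    (hdisj : ∀ c, Disjoint (Vset c) (Eset c))
    (hpart : ∀ c, Vset c ∪ Eset c = Rset c)
    (p phat : C → R → ℝ)
    (hp0 : ∀ c r, 0 ≤ p c r) (hp1 : ∀ c, ∑ r ∈ Rset c, p c r = 1)
    (hphat0 : ∀ c r, 0 ≤ phat c r) (hphat1 : ∀ c, ∑ r ∈ Rset c, phat c r = 1)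
    (herrfree : ∀ c, ∑ r ∈ Eset c, p c r = 0)
    (t : ℝ) (minE maxV : ℕ)
    (hminE : ∀ c, minE ≤ (Eset c).card)
    (hmaxV : ∀ c, (Vset c).card ≤ maxV)
    (hminEpos : 0 < minE)
    (ht : t = 1 / (minE : ℝ)) :
    (∑ c, ∑ r ∈ Eset c, if ¬ (phat c r > t) then μ c * phat c r else 0) ≥
      2 * (∑ c, ∑ r ∈ Vset c, if ¬ (phat c r > t) then
            (μ c * p c r / 2 + (if r ∈ Eset c then μ c / (2 * ((Eset c).card : ℝ)) else 0))
          else 0)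
      - (maxV : ℝ) / (minE : ℝ)
      - |∑ c, ∑ r ∈ Rset c, if phat c r > t then μ c * (phat c r - p c r) else 0| := by
  have hpE : ∀ c, ∀ r ∈ Eset c, p c r = 0 := by
    intro c
    exact (Finset.sum_eq_zero_iff_of_nonneg (fun r _ => hp0 c r)).mp (herrfree c)
  have hminE0 : (0:ℝ) < (minE : ℝ) := by exact_mod_cast hminEpos
  have ht0 : 0 < t := by rw [ht]; positivity
  set PA := ∑ c, ∑ r ∈ Rset c, if phat c r > t then μ c * phat c r else 0 with hPAdef
  set pA := ∑ c, ∑ r ∈ Rset c, if phat c r > t then μ c * p c r else 0 with hpAdef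
  set PBV := ∑ c, ∑ r ∈ Vset c, if ¬ (phat c r > t) then μ c * phat c r else 0 with hPBVdef
  set PBE := ∑ c, ∑ r ∈ Eset c, if ¬ (phat c r > t) then μ c * phat c r else 0 with hPBEdef
  set SV := ∑ c, ∑ r ∈ Vset c, if ¬ (phat c r > t) then μ c * p c r else 0 with hSVdef
  set SE := ∑ c, ∑ r ∈ Eset c, if ¬ (phat c r > t) then μ c * p c r else 0 with hSEdef
  -- key splitting identity
  have key : ∀ (f : C → R → ℝ), (∀ c, ∑ r ∈ Rset c, f c r = 1) →
      (∑ c, ∑ r ∈ Rset c, if phat c r > t then μ c * f c r else 0)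
      + ((∑ c, ∑ r ∈ Vset c, if ¬ (phat c r > t) then μ c * f c r else 0)
      + (∑ c, ∑ r ∈ Eset c, if ¬ (phat c r > t) then μ c * f c r else 0)) = 1 := by
    intro f hf1
    rw [← Finset.sum_add_distrib, ← Finset.sum_add_distrib]
    have hc : ∀ c ∈ Finset.univ, (∑ r ∈ Rset c, if phat c r > t then μ c * f c r else 0)
        + ((∑ r ∈ Vset c, if ¬ (phat c r > t) then μ c * f c r else 0)
        + (∑ r ∈ Eset c, if ¬ (phat c r > t) then μ c * f c r else 0)) = μ c := by
      intro c _
      have hu : (∑ r ∈ Vset c, if ¬ (phat c r > t) then μ c * f c r else 0)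
          + (∑ r ∈ Eset c, if ¬ (phat c r > t) then μ c * f c r else 0)
          = ∑ r ∈ Rset c, if ¬ (phat c r > t) then μ c * f c r else 0 := by
        rw [← hpart c, Finset.sum_union (hdisj c)]
      rw [hu, ← Finset.sum_add_distrib]
      have : ∀ r ∈ Rset c, ((if phat c r > t then μ c * f c r else 0)
          + (if ¬ (phat c r > t) then μ c * f c r else 0)) = μ c * f c r := by
        intro r _
        by_cases h : phat c r > t <;> simp [h]
      rw [Finset.sum_congr rfl this, ← Finset.mul_sum, hf1 c, mul_one]
    rw [Finset.sum_congr rfl hc, hμ1]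
  have h1 : PA + (PBV + PBE) = 1 := key phat hphat1
  have h2 : pA + (SV + SE) = 1 := key p hp1
  -- SE = 0
  have hSE0 : SE = 0 := by
    rw [hSEdef]
    apply Finset.sum_eq_zero
    intro c _
    apply Finset.sum_eq_zero
    intro r hr
    rw [hpE c r hr, mul_zero]; simp
  -- PBV ≤ maxV * t
  have hPBVle : PBV ≤ (maxV : ℝ) * t := by
    have hc : ∀ c ∈ Finset.univ,
        (∑ r ∈ Vset c, if ¬ (phat c r > t) then μ c * phat c r else 0) ≤ (maxV : ℝ) * (μ c * t) := by
      intro c _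
      calc (∑ r ∈ Vset c, if ¬ (phat c r > t) then μ c * phat c r else 0)
          ≤ ∑ r ∈ Vset c, μ c * t := by
            apply Finset.sum_le_sum
            intro r _
            by_cases h : phat c r > t
            · simp [h]; exact mul_nonneg (hμ0 c) ht0.le
            · simp only [h, not_false_iff, if_true]
              exact mul_le_mul_of_nonneg_left (not_lt.mp h) (hμ0 c)
        _ = ((Vset c).card : ℝ) * (μ c * t) := by rw [Finset.sum_const, nsmul_eq_mul]
        _ ≤ (maxV : ℝ) * (μ c * t) := by
            apply mul_le_mul_of_nonneg_right _ (mul_nonneg (hμ0 c) ht0.le)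
            exact_mod_cast hmaxV c
    calc PBV ≤ ∑ c, (maxV : ℝ) * (μ c * t) := Finset.sum_le_sum hc
      _ = (maxV : ℝ) * t := by
          rw [← Finset.mul_sum]
          have : ∑ c, μ c * t = t := by rw [← Finset.sum_mul, hμ1, one_mul]
          rw [this]
  -- δ identity
  have hδ : PA - pA = ∑ c, ∑ r ∈ Rset c, if phat c r > t then μ c * (phat c r - p c r) else 0 := by
    rw [hPAdef, hpAdef, ← Finset.sum_sub_distrib]
    apply Finset.sum_congr rfl
    intro c _
    rw [← Finset.sum_sub_distrib]
    apply Finset.sum_congr rfl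
    intro r _
    by_cases h : phat c r > t <;> simp [h] <;> ring
  -- DBandV simplification
  have hDB : (∑ c, ∑ r ∈ Vset c, if ¬ (phat c r > t) then
        (μ c * p c r / 2 + (if r ∈ Eset c then μ c / (2 * ((Eset c).card : ℝ)) else 0))
      else 0) = SV / 2 := by
    rw [hSVdef, Finset.sum_div]
    apply Finset.sum_congr rfl
    intro c _
    rw [Finset.sum_div]
    apply Finset.sum_congr rfl
    intro r hr
    have hrE : r ∉ Eset c := Finset.disjoint_left.mp (hdisj c) hr
    by_cases h : phat c r > t <;> simp [h, hrE]
  rw [hDB, ← hδ]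
  have habs : PA - pA ≤ |PA - pA| := le_abs_self _
  have hmt : (maxV : ℝ) / (minE : ℝ) = (maxV : ℝ) * t := by rw [ht]; ring
  rw [hmt]
  have hSV2 : 2 * (SV / 2) = SV := by ring
  rw [hSV2]
  linarith

/-- Below the threshold (`B := X \ A`), the base model's error mass
satisfies `phat(B \ V) ≥ 2·D(B ∩ V) − (max_c |V_c|)/(min_c |E_c|) − δ`. -/
theorem stmt3 {C R : Type} [Fintype C] [Nonempty C] [Fintype R]
    (μ : C → ℝ) (hμ0 : ∀ c, 0 ≤ μ c) (hμ1 : ∑ c, μ c = 1)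
    (Rset Vset Eset : C → Finset R)
    (hVne : ∀ c, (Vset c).Nonempty) (hEne : ∀ c, (Eset c).Nonempty)
    (hdisj : ∀ c, Disjoint (Vset c) (Eset c))
    (hpart : ∀ c, Vset c ∪ Eset c = Rset c)
    (p phat : C → R → ℝ)
    (hp0 : ∀ c r, 0 ≤ p c r) (hp1 : ∀ c, ∑ r ∈ Rset c, p c r = 1)
    (hpsupp : ∀ c, ∀ r ∉ Rset c, p c r = 0)
    (hphat0 : ∀ c r, 0 ≤ phat c r) (hphat1 : ∀ c, ∑ r ∈ Rset c, phat c r = 1)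
    (hphatsupp : ∀ c, ∀ r ∉ Rset c, phat c r = 0)
    -- error-free training distribution: p(E_c | c) = 0 for every prompt c
    (herrfree : ∀ c, ∑ r ∈ Eset c, p c r = 0) :
    let minE : ℕ := Finset.univ.inf' Finset.univ_nonempty (fun c => (Eset c).card)
    let maxV : ℕ := Finset.univ.sup' Finset.univ_nonempty (fun c => (Vset c).card)
    -- the mixture distribution D
    let D : C → R → ℝ := fun c r => μ c * p c r / 2 +
      (if r ∈ Eset c then μ c / (2 * ((Eset c).card : ℝ)) else 0)
    -- phat-mass of B \ V (below-threshold erroneous pairs)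
    let phatBnotV : ℝ := ∑ c, ∑ r ∈ Eset c,
      if ¬ (phat c r > 1 / (minE : ℝ)) then μ c * phat c r else 0
    -- D-mass of B ∩ V (below-threshold valid pairs)
    let DBandV : ℝ := ∑ c, ∑ r ∈ Vset c,
      if ¬ (phat c r > 1 / (minE : ℝ)) then D c r else 0
    -- calibration gap δ = |phat(A) − p(A)|
    let δ : ℝ := |∑ c, ∑ r ∈ Rset c,
      if phat c r > 1 / (minE : ℝ) then μ c * (phat c r - p c r) else 0|
    phatBnotV ≥ 2 * DBandV - (maxV : ℝ) / (minE : ℝ) - δ := by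
  intro minE maxV D phatBnotV DBandV δ
  have hminEpos : 0 < minE := by
    have : ∀ c ∈ (Finset.univ : Finset C), 0 < (Eset c).card :=
      fun c _ => Finset.card_pos.mpr (hEne c)
    exact (Finset.lt_inf'_iff _).mpr this
  exact stmt3_aux μ hμ0 hμ1 Rset Vset Eset hdisj hpart p phat hp0 hp1 hphat0 hphat1
    herrfree (1 / (minE : ℝ)) minE maxV
    (fun c => Finset.inf'_le (fun c => (Eset c).card) (Finset.mem_univ c))
    (fun c => Finset.le_sup' (fun c => (Vset c).card) (Finset.mem_univ c))
    hminEpos rfl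
end

section
/- Pure multiple-choice bound: suppose |V_c| = 1 for every prompt c and let C := min_c |E_c| + 1 be the number of choices. Then for every parameter θ, the generative error rate of p̂_θ satisfies err ≥ 2·(1 − 1/C)·opt(G), where opt(G) := min_{g ∈ G} Pr_{x∼D}[g(x) ≠ f(x)] is the smallest misclassification rate achievable by any thresholded-language-model classifier in the family G. -/
/-!
Draw the threshold `t` uniformly from `[0, 1]`. A response of model probability `q` is labelled `+`
for a fraction `q` of the thresholds, so the expected misclassification of `g_{θ,t}` on prompt `c`
is `μ c / 2 · (1 - p(a_c)) + μ c / (2 |E_c|) · ∑_{r ∈ E_c} p(r) = μ c (1 - p(a_c)) (1 + 1 / |E_c|) / 2`.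
As `|E_c| ≥ C - 1`, this is at most `C / (2 (C - 1))` times the generative error on `c`, and some
threshold does no worse than the average.
-/

open Finset

open scoped Classical

open MeasureTheory Set

lemma setIntegral_Icc_indicator_Iio {p : ℝ} (hp0 : 0 ≤ p) (hp1 : p ≤ 1) (B : ℝ) :
    ∫ t in Icc (0 : ℝ) 1, (Iio p).indicator (fun _ => B) t = p * B := by
  have hset : Icc (0 : ℝ) 1 ∩ Iio p = Ico 0 p := by
    ext t; simp only [Set.mem_inter_iff, Set.mem_Icc, Set.mem_Iio, Set.mem_Ico]
    constructor
    · rintro ⟨⟨h0, -⟩, hp⟩; exact ⟨h0, hp⟩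
    · rintro ⟨h0, hp⟩; exact ⟨⟨h0, by linarith⟩, hp⟩
  rw [setIntegral_indicator measurableSet_Iio, setIntegral_const, hset, Real.volume_real_Ico,
    sub_zero, max_eq_left hp0, smul_eq_mul]

lemma setIntegral_Icc_indicator_Ici {p : ℝ} (hp0 : 0 ≤ p) (hp1 : p ≤ 1) (B : ℝ) :
    ∫ t in Icc (0 : ℝ) 1, (Ici p).indicator (fun _ => B) t = (1 - p) * B := by
  have hset : Icc (0 : ℝ) 1 ∩ Ici p = Icc p 1 := by
    ext t; simp only [Set.mem_inter_iff, Set.mem_Icc, Set.mem_Ici]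
    constructor
    · rintro ⟨⟨-, h1⟩, hp⟩; exact ⟨hp, h1⟩
    · rintro ⟨hp, h1⟩; exact ⟨⟨by linarith, h1⟩, hp⟩
  rw [setIntegral_indicator measurableSet_Ici, setIntegral_const, hset, Real.volume_real_Icc,
    max_eq_left (by linarith), smul_eq_mul]

lemma integrableOn_Icc_indicator_const {s : Set ℝ} (hs : MeasurableSet s) (B : ℝ) :
    IntegrableOn (s.indicator fun _ => B) (Icc (0 : ℝ) 1) :=
  (integrableOn_const (by simp)).indicator hs

lemma exists_mem_Icc_le_setIntegral {f : ℝ → ℝ} (hf : IntegrableOn f (Icc 0 1)) :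
    ∃ t ∈ Icc (0 : ℝ) 1, f t ≤ ∫ t in Icc (0 : ℝ) 1, f t := by
  have : IsProbabilityMeasure (volume.restrict (Icc (0 : ℝ) 1)) := ⟨by simp⟩
  obtain ⟨t, ht, hle⟩ := exists_notMem_null_le_integral hf
    (N := (Icc (0 : ℝ) 1)ᶜ) (by simp [Measure.restrict_apply measurableSet_Icc.compl])
  exact ⟨t, not_not.mp ht, hle⟩

section ThresholdLoss

variable {R : Type}

/-- The `D`-mass misclassified by the threshold `t` on one prompt, where `D` puts `α` on the valid
response `r₀` and `β` on each erroneous response in `S \ {r₀}`. -/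
noncomputable def thresholdLoss (S : Finset R) (r₀ : R) (p : R → ℝ) (α β t : ℝ) : ℝ :=
  (Ici (p r₀)).indicator (fun _ => α) t + ∑ r ∈ S \ {r₀}, (Iio (p r)).indicator (fun _ => β) t

lemma sum_ite_misclassified_eq_thresholdLoss {S : Finset R} {r₀ : R} (h : r₀ ∈ S) (p : R → ℝ)
    (α β t : ℝ) :
    ∑ r ∈ S, (if (r = r₀ ∧ ¬ p r > t) ∨ (r ≠ r₀ ∧ p r > t) then
      (if r = r₀ then α else 0) + (if r ∈ S \ {r₀} then β else 0) else 0)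
    = thresholdLoss S r₀ p α β t := by
  rw [thresholdLoss, sum_eq_sum_sdiff_singleton_add h, add_comm]
  congr 1
  · simp [Set.indicator_apply]
  · refine sum_congr rfl fun r hr => ?_
    have hr₀ : r ≠ r₀ := by simpa using (mem_sdiff.mp hr).2
    simp [Set.indicator_apply, hr₀, hr]

lemma thresholdLoss_nonneg (S : Finset R) (r₀ : R) (p : R → ℝ) {α β : ℝ} (hα : 0 ≤ α)
    (hβ : 0 ≤ β) (t : ℝ) : 0 ≤ thresholdLoss S r₀ p α β t :=
  add_nonneg (Set.indicator_nonneg (fun _ _ => hα) _)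
    (sum_nonneg fun _ _ => Set.indicator_nonneg (fun _ _ => hβ) _)

lemma integrableOn_thresholdLoss (S : Finset R) (r₀ : R) (p : R → ℝ) (α β : ℝ) :
    IntegrableOn (thresholdLoss S r₀ p α β) (Icc 0 1) :=
  (integrableOn_Icc_indicator_const measurableSet_Ici α).add
    (integrable_finsetSum _ fun _ _ => integrableOn_Icc_indicator_const measurableSet_Iio β)

lemma setIntegral_thresholdLoss {S : Finset R} {r₀ : R} (h : r₀ ∈ S) {p : R → ℝ}
    (hp0 : ∀ r, 0 ≤ p r) (hp1 : ∑ r ∈ S, p r = 1) (α β : ℝ) :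
    ∫ t in Icc (0 : ℝ) 1, thresholdLoss S r₀ p α β t = (1 - p r₀) * (α + β) := by
  have hle : ∀ r ∈ S, p r ≤ 1 := fun r hr =>
    hp1 ▸ single_le_sum (fun r _ => hp0 r) hr
  have hrest : ∑ r ∈ S \ {r₀}, p r = 1 - p r₀ := by
    rw [← hp1, sum_eq_sum_sdiff_singleton_add h, add_sub_cancel_right]
  unfold thresholdLoss
  rw [integral_add (integrableOn_Icc_indicator_const measurableSet_Ici α)
      (integrable_finsetSum _ fun _ _ => integrableOn_Icc_indicator_const measurableSet_Iio β),
    integral_finsetSum _ fun _ _ => integrableOn_Icc_indicator_const measurableSet_Iio β,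
    setIntegral_Icc_indicator_Ici (hp0 r₀) (hle r₀ h)]
  rw [sum_congr rfl fun r hr => setIntegral_Icc_indicator_Iio (hp0 r)
    (hle r (mem_sdiff.mp hr).1) β, ← sum_mul, hrest]
  ring

end ThresholdLoss

lemma two_mul_one_sub_inv_mul_le_one {m k : ℕ} (hmk : m ≤ k) :
    2 * (1 - 1 / ((m + 1 : ℕ) : ℝ)) * (1 / 2 + 1 / (2 * k)) ≤ 1 := by
  rcases Nat.eq_zero_or_pos k with rfl | hk
  · simp [Nat.le_zero.mp hmk]
  · have hmk' : (m : ℝ) ≤ k := by exact_mod_cast hmk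
    have hk' : (0 : ℝ) < k := by exact_mod_cast hk
    push_cast
    rw [show 2 * (1 - 1 / ((m : ℝ) + 1)) * (1 / 2 + 1 / (2 * k)) = m * (k + 1) / ((m + 1) * k) by
      field_simp; ring, div_le_one (by positivity)]
    nlinarith

theorem stmt4_general {C R Θ : Type} [Fintype C] [Nonempty C]
    (μ : C → ℝ) (hμ0 : ∀ c, 0 ≤ μ c)
    (Rset : C → Finset R) (a : C → R)
    (ha : ∀ c, a c ∈ Rset c)
    (phat : Θ → C → R → ℝ)
    (hphat0 : ∀ θ c r, 0 ≤ phat θ c r)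
    (hphat1 : ∀ θ c, ∑ r ∈ Rset c, phat θ c r = 1) :
    -- number of choices C = min_c |E_c| + 1
    let Cnum : ℕ := (Finset.univ.inf' Finset.univ_nonempty
      (fun c => (Rset c \ {a c}).card)) + 1
    -- D: with prob 1/2 draw c ∼ μ and r = a_c; with prob 1/2 draw c ∼ μ and r uniform in E_c
    let D : C → R → ℝ := fun c r => (if r = a c then μ c / 2 else 0) +
      (if r ∈ Rset c \ {a c} then μ c / (2 * ((Rset c \ {a c}).card : ℝ)) else 0)
    -- misclassification rate of the thresholded classifier g_{θ,t}
    let erriv : Θ → ℝ → ℝ := fun θ t => ∑ c, ∑ r ∈ Rset c,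
      if (r = a c ∧ ¬ (phat θ c r > t)) ∨ (r ≠ a c ∧ phat θ c r > t) then D c r else 0
    -- opt(G): smallest misclassification rate over the family G = {g_{θ,t} : θ ∈ Θ, t ∈ [0,1]}
    let opt : ℝ := sInf {x : ℝ | ∃ θ : Θ, ∃ t ∈ Set.Icc (0 : ℝ) 1, x = erriv θ t}
    -- generative error rate of phat θ
    let err : Θ → ℝ := fun θ => ∑ c, μ c * ∑ r ∈ Rset c \ {a c}, phat θ c r
    ∀ θ : Θ, err θ ≥ 2 * (1 - 1 / (Cnum : ℝ)) * opt := by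
  intro Cnum D erriv opt err θ
  let k : C → ℕ := fun c => #(Rset c \ {a c})
  let loss : Θ → C → ℝ → ℝ := fun θ c =>
    thresholdLoss (Rset c) (a c) (phat θ c) (μ c / 2) (μ c / (2 * k c))
  have herriv : ∀ θ t, erriv θ t = ∑ c, loss θ c t := fun θ t =>
    sum_congr rfl fun c _ => sum_ite_misclassified_eq_thresholdLoss (ha c) _ _ _ _
  obtain ⟨t, ht, hle⟩ := exists_mem_Icc_le_setIntegral
    (integrable_finsetSum univ fun c _ => integrableOn_thresholdLoss _ _ (phat θ c) _ _)
  have hopt : opt ≤ erriv θ t := by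
    refine csInf_le ⟨0, ?_⟩ ⟨θ, t, ht, rfl⟩
    rintro _ ⟨θ', t', -, rfl⟩
    rw [herriv]
    exact sum_nonneg fun c _ => thresholdLoss_nonneg _ _ _ (div_nonneg (hμ0 c) zero_le_two)
      (div_nonneg (hμ0 c) (mul_nonneg zero_le_two (Nat.cast_nonneg _))) _
  have hfac : 0 ≤ 2 * (1 - 1 / (Cnum : ℝ)) := by
    have : 1 / (Cnum : ℝ) ≤ 1 := div_le_one_of_le₀ (by exact_mod_cast Nat.le_add_left 1 _)
      (by positivity)
    linarith
  have hmk : ∀ c, univ.inf' univ_nonempty k ≤ k c := fun c => inf'_le _ (mem_univ c)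
  calc 2 * (1 - 1 / (Cnum : ℝ)) * opt
      ≤ 2 * (1 - 1 / (Cnum : ℝ)) * ∫ t in Set.Icc (0 : ℝ) 1, ∑ c, loss θ c t := by
        gcongr; exact (hopt.trans_eq (herriv θ t)).trans hle
    _ = ∑ c, μ c * (1 - phat θ c (a c)) *
          (2 * (1 - 1 / (Cnum : ℝ)) * (1 / 2 + 1 / (2 * k c))) := by
        rw [integral_finsetSum _ fun c _ => integrableOn_thresholdLoss _ _ _ _ _, mul_sum]
        refine sum_congr rfl fun c _ => ?_
        rw [setIntegral_thresholdLoss (ha c) (hphat0 θ c) (hphat1 θ c)]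
        ring
    _ ≤ ∑ c, μ c * (1 - phat θ c (a c)) := by
        refine sum_le_sum fun c _ => mul_le_of_le_one_right ?_ ?_
        · exact mul_nonneg (hμ0 c) (sub_nonneg.2 <|
            hphat1 θ c ▸ single_le_sum (fun r _ => hphat0 θ c r) (ha c))
        · exact two_mul_one_sub_inv_mul_le_one (hmk c)
    _ = err θ := by
        refine sum_congr rfl fun c _ => ?_
        rw [← hphat1 θ c, sum_eq_sum_sdiff_singleton_add (ha c), add_sub_cancel_right]

/-- (Theorem 2 of the paper: pure multiple choice / agnostic bound.)
Each prompt `c` has a single valid response `a c` among the plausible responses `Rset c`;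
`Cnum := min_c |E_c| + 1` is the number of choices.  For the family
`G = {g_{θ,t}}` of thresholded-language-model classifiers, every model in the family
`phat θ` satisfies `err(θ) ≥ 2·(1 − 1/Cnum)·opt(G)`. -/
theorem stmt4 {C R Θ : Type} [Fintype C] [Nonempty C] [Fintype R]
    (μ : C → ℝ) (hμ0 : ∀ c, 0 ≤ μ c) (hμ1 : ∑ c, μ c = 1)
    (Rset : C → Finset R) (a : C → R)
    (ha : ∀ c, a c ∈ Rset c)
    -- the erroneous responses E_c = R_c \ {a_c} are nonempty
    (hEne : ∀ c, (Rset c \ {a c}).Nonempty)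
    (phat : Θ → C → R → ℝ)
    (hphat0 : ∀ θ c r, 0 ≤ phat θ c r)
    (hphat1 : ∀ θ c, ∑ r ∈ Rset c, phat θ c r = 1)
    (hphatsupp : ∀ θ c, ∀ r ∉ Rset c, phat θ c r = 0) :
    -- number of choices C = min_c |E_c| + 1
    let Cnum : ℕ := (Finset.univ.inf' Finset.univ_nonempty
      (fun c => (Rset c \ {a c}).card)) + 1
    -- D: with prob 1/2 draw c ∼ μ and r = a_c; with prob 1/2 draw c ∼ μ and r uniform in E_c
    let D : C → R → ℝ := fun c r => (if r = a c then μ c / 2 else 0) +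
      (if r ∈ Rset c \ {a c} then μ c / (2 * ((Rset c \ {a c}).card : ℝ)) else 0)
    -- misclassification rate of the thresholded classifier g_{θ,t}
    let erriv : Θ → ℝ → ℝ := fun θ t => ∑ c, ∑ r ∈ Rset c,
      if (r = a c ∧ ¬ (phat θ c r > t)) ∨ (r ≠ a c ∧ phat θ c r > t) then D c r else 0
    -- opt(G): smallest misclassification rate over the family G = {g_{θ,t} : θ ∈ Θ, t ∈ [0,1]}
    let opt : ℝ := sInf {x : ℝ | ∃ θ : Θ, ∃ t ∈ Set.Icc (0 : ℝ) 1, x = erriv θ t}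
    -- generative error rate of phat θ
    let err : Θ → ℝ := fun θ => ∑ c, μ c * ∑ r ∈ Rset c \ {a c}, phat θ c r
    ∀ θ : Θ, err θ ≥ 2 * (1 - 1 / (Cnum : ℝ)) * opt :=
  stmt4_general μ hμ0 Rset a ha phat hphat0 hphat1
end

section
/- Suppose |V_c| = 1 for every prompt c and let C := min_c |E_c| + 1. Then the average misclassification rate over a uniformly random threshold satisfies E_{t∼Unif[0,1]}[erriv(f̂_t)] ≤ (1/2)·(1/(C−1) + 1)·err. -/
/-!
A threshold `t ∼ Unif[0,1]` misclassifies a response of model probability `p ∈ [0,1]` with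
probability `1 - p` if it is the valid one and with probability `p` if it is erroneous. Weighted
by `D`, prompt `c` therefore contributes
`μ c / 2 · (1 - p̂(a_c|c)) + μ c / (2 |E_c|) · p̂(E_c|c) = ½ (1 / |E_c| + 1) · μ c · p̂(E_c|c)`,
and `|E_c| ≥ C - 1` bounds this by the `c`-summand of `½ (1 / (C - 1) + 1) · err`.
-/

open Finset MeasureTheory

open scoped Classical

section

open Set Filter

lemma integral_indicator_Ici {p : ℝ} (hp0 : 0 ≤ p) (hp1 : p ≤ 1) (K : ℝ) :
    ∫ t in (0:ℝ)..1, (Ici p).indicator (fun _ => K) t = (1 - p) * K := by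
  rw [intervalIntegral.integral_of_le zero_le_one, integral_indicator_const _ measurableSet_Ici,
    measureReal_restrict_apply measurableSet_Ici, inter_comm,
    measureReal_congr (EventuallyEq.rfl.inter Ioi_ae_eq_Ici.symm), Ioc_inter_Ioi,
    max_eq_right hp0, Real.volume_real_Ioc_of_le hp1, smul_eq_mul]

lemma integral_indicator_Iio {p : ℝ} (hp0 : 0 ≤ p) (hp1 : p ≤ 1) (K : ℝ) :
    ∫ t in (0:ℝ)..1, (Iio p).indicator (fun _ => K) t = p * K := by
  rw [intervalIntegral.integral_of_le zero_le_one, integral_indicator_const _ measurableSet_Iio,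
    measureReal_restrict_apply measurableSet_Iio, inter_comm,
    measureReal_congr (EventuallyEq.rfl.inter Iio_ae_eq_Iic), Ioc_inter_Iic,
    min_eq_right hp1, Real.volume_real_Ioc_of_le hp0, smul_eq_mul, sub_zero]

lemma ite_misclassified_eq_indicator (v : Prop) [Decidable v] (p K : ℝ) :
    (fun t => if (v ∧ ¬ p > t) ∨ (¬ v ∧ p > t) then K else 0) =
      if v then (Ici p).indicator (fun _ => K) else (Iio p).indicator (fun _ => K) := by
  ext t
  by_cases hv : v <;> simp [hv, indicator_apply]

lemma intervalIntegrable_ite_misclassified (v : Prop) [Decidable v] (p K : ℝ) :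
    IntervalIntegrable (fun t => if (v ∧ ¬ p > t) ∨ (¬ v ∧ p > t) then K else 0) volume 0 1 := by
  rw [ite_misclassified_eq_indicator, intervalIntegrable_iff]
  split_ifs
  · exact (integrableOn_const measure_Ioc_lt_top.ne).indicator measurableSet_Ici
  · exact (integrableOn_const measure_Ioc_lt_top.ne).indicator measurableSet_Iio

lemma integral_ite_misclassified (v : Prop) [Decidable v] {p : ℝ} (hp0 : 0 ≤ p) (hp1 : p ≤ 1)
    (K : ℝ) :
    ∫ t in (0:ℝ)..1, (if (v ∧ ¬ p > t) ∨ (¬ v ∧ p > t) then K else 0) =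
      (if v then 1 - p else p) * K := by
  rw [ite_misclassified_eq_indicator]
  split_ifs
  · exact integral_indicator_Ici hp0 hp1 K
  · exact integral_indicator_Iio hp0 hp1 K

end

lemma sum_ite_misclassified_mul_weight {R : Type} [DecidableEq R] {S : Finset R} {a : R}
    (ha : a ∈ S) (p : R → ℝ) (hp : ∑ r ∈ S, p r = 1) (w : ℝ) :
    ∑ r ∈ S, (if r = a then 1 - p r else p r) *
        ((if r = a then w / 2 else 0) + (if r ∈ S \ {a} then w / (2 * (#(S \ {a}) : ℝ)) else 0)) =
      1 / 2 * (1 / (#(S \ {a}) : ℝ) + 1) * (w * ∑ r ∈ S \ {a}, p r) := by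
  have hvalid : 1 - p a = ∑ r ∈ S \ {a}, p r := by
    rw [← hp, sdiff_singleton_eq_erase, ← sum_erase_add _ _ ha, add_sub_cancel_right]
  have herroneous : ∀ r ∈ S \ {a}, (if r = a then 1 - p r else p r) *
      ((if r = a then w / 2 else 0) + (if r ∈ S \ {a} then w / (2 * (#(S \ {a}) : ℝ)) else 0)) =
        w / (2 * (#(S \ {a}) : ℝ)) * p r := by
    intro r hr
    have hra : r ≠ a := by simpa using (mem_sdiff.mp hr).2
    simp only [hra, hr, if_false, if_true, zero_add, mul_comm]
  rw [← sum_erase_add _ _ ha, ← sdiff_singleton_eq_erase, sum_congr rfl herroneous, ← mul_sum]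
  simp only [if_true, mem_sdiff, mem_singleton, not_true_eq_false, and_false, if_false, add_zero,
    hvalid]
  ring

theorem stmt6_general {C R : Type} [Fintype C] [Nonempty C]
    (μ : C → ℝ) (hμ0 : ∀ c, 0 ≤ μ c)
    (Rset : C → Finset R) (a : C → R)
    (ha : ∀ c, a c ∈ Rset c)
    (hEne : ∀ c, (Rset c \ {a c}).Nonempty)
    (phat : C → R → ℝ)
    (hphat0 : ∀ c r, 0 ≤ phat c r)
    (hphat1 : ∀ c, ∑ r ∈ Rset c, phat c r = 1) :
    -- number of choices C = min_c |E_c| + 1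
    let Cnum : ℕ := (Finset.univ.inf' Finset.univ_nonempty
      (fun c => (Rset c \ {a c}).card)) + 1
    -- D: with prob 1/2 draw c ∼ μ and r = a_c; with prob 1/2 draw c ∼ μ and r uniform in E_c
    let D : C → R → ℝ := fun c r => (if r = a c then μ c / 2 else 0) +
      (if r ∈ Rset c \ {a c} then μ c / (2 * ((Rset c \ {a c}).card : ℝ)) else 0)
    -- misclassification rate of the thresholded classifier f̂_t
    let erriv : ℝ → ℝ := fun t => ∑ c, ∑ r ∈ Rset c,
      if (r = a c ∧ ¬ (phat c r > t)) ∨ (r ≠ a c ∧ phat c r > t) then D c r else 0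
    -- generative error rate
    let err : ℝ := ∑ c, μ c * ∑ r ∈ Rset c \ {a c}, phat c r
    -- average over t ∼ Unif[0,1]
    (∫ t in (0:ℝ)..1, erriv t) ≤ (1 / 2) * (1 / ((Cnum : ℝ) - 1) + 1) * err := by
  intro Cnum D erriv err
  have hphat_le_one : ∀ c, ∀ r ∈ Rset c, phat c r ≤ 1 := fun c r hr =>
    hphat1 c ▸ single_le_sum (fun r _ => hphat0 c r) hr
  have hmin_pos : (0 : ℝ) < (Cnum : ℝ) - 1 := by
    simp only [Cnum, Nat.cast_add, Nat.cast_one, add_sub_cancel_right, Nat.cast_pos]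
    exact (lt_inf'_iff _).2 fun c _ => card_pos.mpr (hEne c)
  have hmin_le : ∀ c, (Cnum : ℝ) - 1 ≤ #(Rset c \ {a c}) := fun c => by
    simp only [Cnum, Nat.cast_add, Nat.cast_one, add_sub_cancel_right, Nat.cast_le]
    exact inf'_le _ (mem_univ c)
  have hintegral : ∫ t in (0:ℝ)..1, erriv t =
      ∑ c, ∑ r ∈ Rset c, (if r = a c then 1 - phat c r else phat c r) * D c r := by
    rw [intervalIntegral.integral_finsetSum fun c _ => by
      simpa only [← sum_fn] using IntervalIntegrable.sum (Rset c) fun r _ =>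
        intervalIntegrable_ite_misclassified _ _ _]
    refine sum_congr rfl fun c _ => ?_
    rw [intervalIntegral.integral_finsetSum fun r _ => intervalIntegrable_ite_misclassified _ _ _]
    exact sum_congr rfl fun r hr =>
      integral_ite_misclassified _ (hphat0 c r) (hphat_le_one c r hr) _
  calc ∫ t in (0:ℝ)..1, erriv t
      = ∑ c, 1 / 2 * (1 / (#(Rset c \ {a c}) : ℝ) + 1) * (μ c * ∑ r ∈ Rset c \ {a c}, phat c r) := by
        rw [hintegral]
        exact sum_congr rfl fun c _ => sum_ite_misclassified_mul_weight (ha c) _ (hphat1 c) _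
    _ ≤ ∑ c, 1 / 2 * (1 / ((Cnum : ℝ) - 1) + 1) * (μ c * ∑ r ∈ Rset c \ {a c}, phat c r) := by
        gcongr with c
        · exact mul_nonneg (hμ0 c) (sum_nonneg fun r _ => hphat0 c r)
        · exact hmin_le c
    _ = 1 / 2 * (1 / ((Cnum : ℝ) - 1) + 1) * err := (mul_sum ..).symm

/-- In the pure multiple-choice setting, the misclassification rate of
`f̂_t`, averaged over a uniformly random threshold `t ∈ [0,1]`, satisfies
`E_t[erriv(f̂_t)] ≤ (1/2)·(1/(Cnum−1) + 1)·err`. -/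
theorem stmt6 {C R : Type} [Fintype C] [Nonempty C] [Fintype R]
    (μ : C → ℝ) (hμ0 : ∀ c, 0 ≤ μ c) (hμ1 : ∑ c, μ c = 1)
    (Rset : C → Finset R) (a : C → R)
    (ha : ∀ c, a c ∈ Rset c)
    (hEne : ∀ c, (Rset c \ {a c}).Nonempty)
    (phat : C → R → ℝ)
    (hphat0 : ∀ c r, 0 ≤ phat c r)
    (hphat1 : ∀ c, ∑ r ∈ Rset c, phat c r = 1)
    (hphatsupp : ∀ c, ∀ r ∉ Rset c, phat c r = 0) :
    -- number of choices C = min_c |E_c| + 1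
    let Cnum : ℕ := (Finset.univ.inf' Finset.univ_nonempty
      (fun c => (Rset c \ {a c}).card)) + 1
    -- D: with prob 1/2 draw c ∼ μ and r = a_c; with prob 1/2 draw c ∼ μ and r uniform in E_c
    let D : C → R → ℝ := fun c r => (if r = a c then μ c / 2 else 0) +
      (if r ∈ Rset c \ {a c} then μ c / (2 * ((Rset c \ {a c}).card : ℝ)) else 0)
    -- misclassification rate of the thresholded classifier f̂_t
    let erriv : ℝ → ℝ := fun t => ∑ c, ∑ r ∈ Rset c,
      if (r = a c ∧ ¬ (phat c r > t)) ∨ (r ≠ a c ∧ phat c r > t) then D c r else 0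
    -- generative error rate
    let err : ℝ := ∑ c, μ c * ∑ r ∈ Rset c \ {a c}, phat c r
    -- average over t ∼ Unif[0,1]
    (∫ t in (0:ℝ)..1, erriv t) ≤ (1 / 2) * (1 / ((Cnum : ℝ) - 1) + 1) * err :=
  stmt6_general μ hμ0 Rset a ha hEne phat hphat0 hphat1
end

section
/- Suppose |V_c| = 1 for every prompt c and let C := min_c |E_c| + 1. Then the expected false positive rate over a uniformly random threshold satisfies Pr_{t∼Unif[0,1], (c,r)∼D}[f̂_t(c,r) = + and f(c,r) = −] ≤ err/(2(C−1)). -/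
/-! Averaging over the threshold turns each indicator `[p̂(r|c) > t]` into at most `p̂(r|c)`, so the
expected false positive rate is at most `∑_c μ(c) p̂(E_c|c) / (2|E_c|)`; then use `|E_c| ≥ C - 1`. -/

open Finset MeasureTheory

open scoped Classical

theorem ite_lt_eq_indicator (p K : ℝ) :
    (fun t => if p > t then K else 0) = (Set.Iio p).indicator fun _ => K := by
  ext t
  simp [Set.indicator_apply]

theorem intervalIntegrable_ite_lt (p K : ℝ) {a b : ℝ} :
    IntervalIntegrable (fun t => if p > t then K else 0) volume a b := by
  rw [ite_lt_eq_indicator, intervalIntegrable_iff]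
  exact (integrableOn_const measure_Ioc_lt_top.ne).indicator measurableSet_Iio

theorem intervalIntegral_ite_lt_le {p K : ℝ} (hp : 0 ≤ p) (hK : 0 ≤ K) :
    ∫ t in (0 : ℝ)..1, (if p > t then K else 0) ≤ K * p := by
  rw [ite_lt_eq_indicator, intervalIntegral.integral_of_le zero_le_one,
    setIntegral_indicator measurableSet_Iio, setIntegral_const, smul_eq_mul, mul_comm]
  have hsub : Set.Ioc 0 1 ∩ Set.Iio p ⊆ Set.Ioo 0 p := fun t ht => ⟨ht.1.1, ht.2⟩
  grw [hsub, Real.volume_real_Ioo_of_le hp, sub_zero]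
  exact measure_Ioo_lt_top.ne

theorem intervalIntegral_sum_ite_lt_le {ι : Type*} (s : Finset ι) {p K : ι → ℝ}
    (hp : ∀ i ∈ s, 0 ≤ p i) (hK : ∀ i ∈ s, 0 ≤ K i) :
    ∫ t in (0 : ℝ)..1, ∑ i ∈ s, (if p i > t then K i else 0) ≤ ∑ i ∈ s, K i * p i := by
  rw [intervalIntegral.integral_finsetSum fun i _ => intervalIntegrable_ite_lt (p i) (K i)]
  exact sum_le_sum fun i hi => intervalIntegral_ite_lt_le (hp i hi) (hK i hi)

theorem sum_ite_gt_and_ne_eq_sum_sdiff {R : Type*} [DecidableEq R] (s : Finset R) (a : R)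
    (p D : R → ℝ) {w : ℝ} (hD : ∀ r ∈ s \ {a}, D r = w) (t : ℝ) :
    ∑ r ∈ s, (if p r > t ∧ r ≠ a then D r else 0) = ∑ r ∈ s \ {a}, if p r > t then w else 0 := by
  rw [sdiff_singleton_eq_erase, ← filter_ne', sum_filter]
  refine sum_congr rfl fun r hr => ?_
  by_cases h : r = a
  · simp [h]
  · simp [h, hD r (mem_sdiff.mpr ⟨hr, notMem_singleton.mpr h⟩)]

theorem stmt7_general {C R : Type} [Fintype C] [Nonempty C] [Fintype R]
    (μ : C → ℝ) (hμ0 : ∀ c, 0 ≤ μ c)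
    (Rset : C → Finset R) (a : C → R)
    (hEne : ∀ c, (Rset c \ {a c}).Nonempty)
    (phat : C → R → ℝ)
    (hphat0 : ∀ c r, 0 ≤ phat c r) :
    -- number of choices C = min_c |E_c| + 1
    let Cnum : ℕ := (Finset.univ.inf' Finset.univ_nonempty
      (fun c => (Rset c \ {a c}).card)) + 1
    -- D: with prob 1/2 draw c ∼ μ and r = a_c; with prob 1/2 draw c ∼ μ and r uniform in E_c
    let D : C → R → ℝ := fun c r => (if r = a c then μ c / 2 else 0) +
      (if r ∈ Rset c \ {a c} then μ c / (2 * ((Rset c \ {a c}).card : ℝ)) else 0)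
    -- false positive probability at threshold t: f̂_t(c,r) = + and f(c,r) = −
    let FP : ℝ → ℝ := fun t => ∑ c, ∑ r ∈ Rset c,
      if phat c r > t ∧ r ≠ a c then D c r else 0
    -- generative error rate
    let err : ℝ := ∑ c, μ c * ∑ r ∈ Rset c \ {a c}, phat c r
    (∫ t in (0:ℝ)..1, FP t) ≤ err / (2 * ((Cnum : ℝ) - 1)) := by
  intro Cnum D FP err
  set E : C → Finset R := fun c => Rset c \ {a c}
  set m : ℕ := univ.inf' univ_nonempty fun c => #(E c)
  set w : C → ℝ := fun c => μ c / (2 * #(E c))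
  have hm_pos : (0 : ℝ) < m := by
    exact_mod_cast (le_inf' _ _ fun c _ => card_pos.mpr (hEne c) : 1 ≤ m)
  have hFP (t : ℝ) : FP t = ∑ x ∈ univ.sigma E, if phat x.1 x.2 > t then w x.1 else 0 := by
    rw [sum_sigma]
    refine sum_congr rfl fun c _ =>
      sum_ite_gt_and_ne_eq_sum_sdiff (Rset c) (a c) (phat c) (D c) (w := w c) (fun r hr => ?_) t
    simp only [D, w, E, if_pos hr, if_neg (notMem_singleton.mp (mem_sdiff.mp hr).2), zero_add]
  calc ∫ t in (0:ℝ)..1, FP t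
      ≤ ∑ x ∈ univ.sigma E, w x.1 * phat x.1 x.2 := by
        simp only [hFP]
        exact intervalIntegral_sum_ite_lt_le _ (fun x _ => hphat0 _ _)
          fun x _ => div_nonneg (hμ0 _) (by positivity)
    _ = ∑ c, w c * ∑ r ∈ E c, phat c r := by simp only [sum_sigma, mul_sum]
    _ ≤ ∑ c, μ c * (∑ r ∈ E c, phat c r) / (2 * m) := by
        refine sum_le_sum fun c _ => ?_
        rw [div_mul_eq_mul_div, mul_div_assoc, mul_div_assoc]
        gcongr
        · exact hμ0 c
        · exact sum_nonneg fun r _ => hphat0 c r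
        · exact inf'_le _ (mem_univ c)
    _ = err / (2 * ((Cnum : ℝ) - 1)) := by
        rw [← sum_div]
        simp only [Cnum, Nat.cast_add, Nat.cast_one, add_sub_cancel_right]
        rfl

/-- In the pure multiple-choice setting, the expected false positive
rate over a uniformly random threshold `t ∈ [0,1]` satisfies
`Pr_{t,(c,r)∼D}[f̂_t = + ∧ f = −] ≤ err / (2(Cnum−1))`. -/
theorem stmt7 {C R : Type} [Fintype C] [Nonempty C] [Fintype R]
    (μ : C → ℝ) (hμ0 : ∀ c, 0 ≤ μ c) (hμ1 : ∑ c, μ c = 1)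
    (Rset : C → Finset R) (a : C → R)
    (ha : ∀ c, a c ∈ Rset c)
    (hEne : ∀ c, (Rset c \ {a c}).Nonempty)
    (phat : C → R → ℝ)
    (hphat0 : ∀ c r, 0 ≤ phat c r)
    (hphat1 : ∀ c, ∑ r ∈ Rset c, phat c r = 1)
    (hphatsupp : ∀ c, ∀ r ∉ Rset c, phat c r = 0) :
    -- number of choices C = min_c |E_c| + 1
    let Cnum : ℕ := (Finset.univ.inf' Finset.univ_nonempty
      (fun c => (Rset c \ {a c}).card)) + 1
    -- D: with prob 1/2 draw c ∼ μ and r = a_c; with prob 1/2 draw c ∼ μ and r uniform in E_c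
    let D : C → R → ℝ := fun c r => (if r = a c then μ c / 2 else 0) +
      (if r ∈ Rset c \ {a c} then μ c / (2 * ((Rset c \ {a c}).card : ℝ)) else 0)
    -- false positive probability at threshold t: f̂_t(c,r) = + and f(c,r) = −
    let FP : ℝ → ℝ := fun t => ∑ c, ∑ r ∈ Rset c,
      if phat c r > t ∧ r ≠ a c then D c r else 0
    -- generative error rate
    let err : ℝ := ∑ c, μ c * ∑ r ∈ Rset c \ {a c}, phat c r
    (∫ t in (0:ℝ)..1, FP t) ≤ err / (2 * ((Cnum : ℝ) - 1)) :=
  stmt7_general μ hμ0 Rset a hEne phat hphat0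
end

section
/- Suppose |V_c| = 1 for every prompt c. Then the expected false negative rate over a uniformly random threshold equals half the generative error rate: Pr_{t∼Unif[0,1], (c,r)∼D}[f̂_t(c,r) = − and f(c,r) = +] = err/2. -/
/-!
A false negative can only occur at the valid response `a c`, which `D` weighs by `μ c / 2` and
which a uniform threshold `t` rejects with probability `1 - p̂(a c | c) = p̂(E_c | c)`.
-/

open Finset MeasureTheory

open scoped Classical

section StepFunction

variable (p v : ℝ)

lemma intervalIntegrable_ite_le (a b : ℝ) :
    IntervalIntegrable (fun t => if p ≤ t then v else 0) volume a b := by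
  have hindicator : (fun t => if p ≤ t then v else 0) = (Set.Ici p).indicator fun _ => v := by
    ext t
    simp [Set.indicator]
  rw [hindicator, intervalIntegrable_iff]
  exact (integrableOn_const measure_Ioc_lt_top.ne).indicator measurableSet_Ici

lemma intervalIntegral_ite_le {a b : ℝ} (hap : a ≤ p) (hpb : p ≤ b) :
    ∫ t in a..b, (if p ≤ t then v else 0) = v * (b - p) := by
  have hbelow : ∫ t in a..p, (if p ≤ t then v else 0) = 0 := by
    rw [intervalIntegral.integral_of_le hap, integral_Ioc_eq_integral_Ioo,
      setIntegral_congr_fun measurableSet_Ioo fun t ht => if_neg (not_le.mpr ht.2)]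
    exact integral_zero _ _
  have habove : ∫ t in p..b, (if p ≤ t then v else 0) = v * (b - p) := by
    rw [intervalIntegral.integral_congr fun t ht => if_pos (Set.uIcc_of_le hpb ▸ ht).1,
      intervalIntegral.integral_const, smul_eq_mul, mul_comm]
  rw [← intervalIntegral.integral_add_adjacent_intervals (intervalIntegrable_ite_le p v a p)
    (intervalIntegrable_ite_le p v p b), hbelow, habove, zero_add]

end StepFunction

lemma Finset.sum_ite_and_eq_of_mem {α M : Type*} [AddCommMonoid M] {s : Finset α} {a : α}
    (ha : a ∈ s) (P : α → Prop) (f : α → M) :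
    ∑ r ∈ s, (if P r ∧ r = a then f r else 0) = if P a then f a else 0 := by
  rw [sum_eq_single_of_mem a ha fun r _ hr => if_neg fun h => hr h.2]
  simp

lemma Finset.sum_sdiff_singleton_eq_one_sub {α : Type*} {s : Finset α} {a : α} {f : α → ℝ}
    (ha : a ∈ s) (hf : ∑ r ∈ s, f r = 1) :
    ∑ r ∈ s \ {a}, f r = 1 - f a := by
  rw [sdiff_singleton_eq_erase, ← hf, ← sum_erase_add s f ha, add_sub_cancel_right]

theorem stmt8_general {C R : Type} [Fintype C]
    (μ : C → ℝ)
    (Rset : C → Finset R) (a : C → R)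
    (ha : ∀ c, a c ∈ Rset c)
    (phat : C → R → ℝ)
    (hphat0 : ∀ c r, 0 ≤ phat c r)
    (hphat1 : ∀ c, ∑ r ∈ Rset c, phat c r = 1) :
    -- D: with prob 1/2 draw c ∼ μ and r = a_c; with prob 1/2 draw c ∼ μ and r uniform in E_c
    let D : C → R → ℝ := fun c r => (if r = a c then μ c / 2 else 0) +
      (if r ∈ Rset c \ {a c} then μ c / (2 * ((Rset c \ {a c}).card : ℝ)) else 0)
    -- false negative probability at threshold t: f̂_t(c,r) = − and f(c,r) = +
    let FN : ℝ → ℝ := fun t => ∑ c, ∑ r ∈ Rset c,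
      if ¬ (phat c r > t) ∧ r = a c then D c r else 0
    -- generative error rate
    let err : ℝ := ∑ c, μ c * ∑ r ∈ Rset c \ {a c}, phat c r
    (∫ t in (0:ℝ)..1, FN t) = err / 2 := by
  intro D FN err
  have herr c : ∑ r ∈ Rset c \ {a c}, phat c r = 1 - phat c (a c) :=
    sum_sdiff_singleton_eq_one_sub (ha c) (hphat1 c)
  have hFN : FN = fun t => ∑ c, if phat c (a c) ≤ t then μ c / 2 else 0 := by
    funext t
    refine sum_congr rfl fun c _ => ?_
    simp only [gt_iff_lt, not_lt, sum_ite_and_eq_of_mem (ha c)]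
    simp [D]
  calc ∫ t in (0:ℝ)..1, FN t
      = ∑ c, ∫ t in (0:ℝ)..1, if phat c (a c) ≤ t then μ c / 2 else 0 := by
        rw [hFN]
        exact intervalIntegral.integral_finsetSum fun c _ => intervalIntegrable_ite_le _ _ _ _
    _ = ∑ c, μ c / 2 * (1 - phat c (a c)) := by
        refine sum_congr rfl fun c _ => intervalIntegral_ite_le _ _ (hphat0 c (a c)) ?_
        linarith [herr c ▸ sum_nonneg fun r (_ : r ∈ Rset c \ {a c}) => hphat0 c r]
    _ = err / 2 := by
        rw [sum_div]
        exact sum_congr rfl fun c _ => by rw [herr]; ring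

/-- In the pure multiple-choice setting, the expected false negative
rate over a uniformly random threshold `t ∈ [0,1]` equals half the generative error rate:
`Pr_{t,(c,r)∼D}[f̂_t = − ∧ f = +] = err / 2`. -/
theorem stmt8 {C R : Type} [Fintype C] [Nonempty C] [Fintype R]
    (μ : C → ℝ) (hμ0 : ∀ c, 0 ≤ μ c) (hμ1 : ∑ c, μ c = 1)
    (Rset : C → Finset R) (a : C → R)
    (ha : ∀ c, a c ∈ Rset c)
    (hEne : ∀ c, (Rset c \ {a c}).Nonempty)
    (phat : C → R → ℝ)
    (hphat0 : ∀ c r, 0 ≤ phat c r)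
    (hphat1 : ∀ c, ∑ r ∈ Rset c, phat c r = 1)
    (hphatsupp : ∀ c, ∀ r ∉ Rset c, phat c r = 0) :
    -- D: with prob 1/2 draw c ∼ μ and r = a_c; with prob 1/2 draw c ∼ μ and r uniform in E_c
    let D : C → R → ℝ := fun c r => (if r = a c then μ c / 2 else 0) +
      (if r ∈ Rset c \ {a c} then μ c / (2 * ((Rset c \ {a c}).card : ℝ)) else 0)
    -- false negative probability at threshold t: f̂_t(c,r) = − and f(c,r) = +
    let FN : ℝ → ℝ := fun t => ∑ c, ∑ r ∈ Rset c,
      if ¬ (phat c r > t) ∧ r = a c then D c r else 0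
    -- generative error rate
    let err : ℝ := ∑ c, μ c * ∑ r ∈ Rset c \ {a c}, phat c r
    (∫ t in (0:ℝ)..1, FN t) = err / 2 :=
  stmt8_general μ Rset a ha phat hphat0 hphat1
end

section
/- Hallucination from computational hardness: let M be a finite message set with |M| ≥ 3 and e: M → H an injective encryption map. For any β ∈ [0,1] and any base model p̂, if the induced thresholded classifier f̂ does not β-break the encryption scheme, i.e. Pr_{x∼D}[f̂(x) ≠ f(x)] > (1−β)/2, then p̂ outputs erroneous decryptions with probability at least 1 − β − 2/(|M|−1) − δ. -/
open Finset

open scoped Classical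

/-!
Fix a prompt `e m`; write `q = p̂(·|e m)`, `t = 1/(|M|-1)` and `err_m = ∑_{x ≠ m} q x`, so that
`q m + q IDK + err_m = 1`. Up to the factor `1/(2|M|)`, `D` weighs the answer `m` by `1`, each
wrong answer by `t` and IDK by `0`. A wrong answer `x` is misclassified only if `q x > t`, and then
its weight is paid for by its own term `q x` of `p̂(A)`. The rest costs at most `err_m + 2t`: if
`q m ≤ t`, the misclassified `m` costs `1 ≤ err_m + t + q IDK`, where `q IDK ≤ t` unless IDK lies
in `A`; if `q m > t`, the term `q m - 1 = -(q IDK + err_m)` of `p̂(A) - p(A)` is absorbed likewise.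
Summing over `m`, `1 - β < 2 erriv ≤ err + 2t + (p̂(A) - p(A)) ≤ err + 2t + δ`.
-/

theorem sum_option_eq_add_add_sum_sdiff {M β : Type*} [Fintype M] [DecidableEq M]
    [AddCommMonoid β] (f : Option M → β) (m : M) :
    ∑ r, f r = f none + f (some m) + ∑ x ∈ univ \ {m}, f (some x) := by
  rw [Fintype.sum_option, sum_eq_sum_sdiff_singleton_add (mem_univ m), add_comm (∑ x ∈ _, _),
    add_assoc]

section Prompt

variable {M : Type*} [Fintype M] [DecidableEq M] {q w : Option M → ℝ} {t : ℝ} {m : M}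

theorem sum_misclassified_le (hq0 : ∀ r, 0 ≤ q r) (hq1 : ∑ r, q r = 1) (ht : 0 ≤ t)
    (hw_none : w none ≤ 0) (hw_some : w (some m) ≤ 1) (hw_err : ∀ x ≠ m, w (some x) ≤ t) :
    ∑ r, (if ((r = none ∨ r = some m) ∧ ¬ q r > t) ∨ (¬ (r = none ∨ r = some m) ∧ q r > t)
        then w r else 0)
      ≤ ∑ x ∈ univ \ {m}, q (some x) + 2 * t
        + ∑ r, (if q r > t then q r - (if r = some m then 1 else 0) else 0) := by
  have herr : ∀ x ∈ univ \ {m},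
      (if ((some x = none ∨ some x = some m) ∧ ¬ q (some x) > t) ∨
          (¬ (some x = none ∨ some x = some m) ∧ q (some x) > t) then w (some x) else 0)
        ≤ if q (some x) > t then q (some x) - (if some x = some m then 1 else 0) else 0 := by
    intro x hx
    have hxm : x ≠ m := by simpa using hx
    by_cases habove : q (some x) > t
    · simp only [habove, hxm, reduceCtorEq, Option.some.injEq, or_self, not_true_eq_false,
        not_false_eq_true, and_self, or_true, if_true, if_false, sub_zero]
      linarith [hw_err x hxm]
    · simp [habove, hxm]
  have hsum := sum_le_sum herr
  rw [sum_option_eq_add_add_sum_sdiff _ m] at hq1 ⊢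
  rw [sum_option_eq_add_add_sum_sdiff _ m]
  simp only [or_true, not_true_eq_false, true_and, false_and, or_false, reduceCtorEq, reduceIte,
    sub_zero] at hsum ⊢
  have hq_none := hq0 none
  have hq_some := hq0 (some m)
  split_ifs <;> linarith

theorem sum_misclassified_le_mul (hq0 : ∀ r, 0 ≤ q r) (hq1 : ∑ r, q r = 1) (ht : 0 ≤ t)
    {s : ℝ} (hs : 0 < s) (hw_none : w none ≤ 0) (hw_some : w (some m) ≤ s)
    (hw_err : ∀ x ≠ m, w (some x) ≤ s * t) :
    ∑ r, (if ((r = none ∨ r = some m) ∧ ¬ q r > t) ∨ (¬ (r = none ∨ r = some m) ∧ q r > t)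
        then w r else 0)
      ≤ s * ∑ x ∈ univ \ {m}, q (some x) + s * (2 * t)
        + ∑ r, (if q r > t then s * (q r - (if r = some m then 1 else 0)) else 0) := by
  have hbound := sum_misclassified_le (w := fun r => w r / s) hq0 hq1 ht
    (div_nonpos_of_nonpos_of_nonneg hw_none hs.le) ((div_le_one hs).2 hw_some)
    (fun x hx => (div_le_iff₀' hs).2 (hw_err x hx))
  have hscaled := mul_le_mul_of_nonneg_left hbound hs.le
  rw [mul_add, mul_add, mul_sum univ, mul_sum univ] at hscaled
  simpa only [mul_ite, mul_zero, mul_div_cancel₀ _ hs.ne'] using hscaled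

end Prompt

theorem stmt16_general {M H : Type} [Fintype M] [DecidableEq M]
    (hM : 3 ≤ Fintype.card M)
    (e : M → H)
    (β : ℝ)
    -- base model: conditional distributions over responses M ∪ {IDK} given a ciphertext
    (phat : H → Option M → ℝ)
    (hphat0 : ∀ h r, 0 ≤ phat h r)
    (hphat1 : ∀ h, ∑ r : Option M, phat h r = 1) :
    let Mc : ℝ := (Fintype.card M : ℝ)
    -- the classifier threshold 1/|E_c| = 1/(|M|−1)
    let thr : ℝ := 1 / (Mc - 1)
    -- D: with prob 1/2, (e m, m) for uniform m; with prob 1/2, c = e m for uniform m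
    -- and r uniform in E_c = M \ {m}; IDK never drawn under D
    let D : M → Option M → ℝ := fun m r =>
      r.elim 0 (fun x => if x = m then 1 / (2 * Mc) else 1 / (2 * Mc * (Mc - 1)))
    -- f labels (e m, r) + iff r is valid for the prompt, i.e. r ∈ {some m, IDK}
    let valid : M → Option M → Prop := fun m r => r = none ∨ r = some m
    -- f̂ labels (c, r) + iff phat(r|c) > 1/(|M|−1)
    let above : M → Option M → Prop := fun m r => phat (e m) r > thr
    let erriv : ℝ := ∑ m, ∑ r : Option M,
      if (valid m r ∧ ¬ above m r) ∨ (¬ valid m r ∧ above m r) then D m r else 0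
    -- probability of an erroneous decryption
    let err : ℝ := ∑ m, (1 / Mc) * ∑ x ∈ Finset.univ \ {m}, phat (e m) (some x)
    -- calibration gap δ = |phat(A) − p(A)|, where p draws m uniformly and outputs (e m, m)
    let δ : ℝ := |∑ m, ∑ r : Option M,
      if above m r
      then (1 / Mc) * (phat (e m) r - (if r = some m then 1 else 0)) else 0|
    -- f̂ does not β-break the scheme
    erriv > (1 - β) / 2 →
    err ≥ 1 - β - 2 / (Mc - 1) - δ := by
  intro Mc thr D valid above erriv err δ hbreak
  have hMc : (3 : ℝ) ≤ Mc := by simp only [Mc]; exact_mod_cast hM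
  have hMc0 : Mc ≠ 0 := by positivity
  have hthr : 0 ≤ thr := div_nonneg zero_le_one (by linarith)
  have hprompt : ∀ m, 2 * ∑ r : Option M,
      (if (valid m r ∧ ¬ above m r) ∨ (¬ valid m r ∧ above m r) then D m r else 0)
      ≤ 1 / Mc * ∑ x ∈ univ \ {m}, phat (e m) (some x) + 1 / Mc * (2 * thr) +
        ∑ r : Option M, if above m r
          then (1 / Mc) * (phat (e m) r - (if r = some m then 1 else 0)) else 0 := fun m => by
    rw [mul_sum]
    simp only [mul_ite, mul_zero]
    refine sum_misclassified_le_mul (hphat0 (e m)) (hphat1 (e m)) hthr (by positivity)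
      (by simp [D]) (le_of_eq ?_) fun x hx => le_of_eq ?_
    · simp only [D, Option.elim_some, ↓reduceIte]
      field_simp
    · have hMc1 : Mc - 1 ≠ 0 := by linarith
      simp only [D, thr, Option.elim_some, if_neg hx]
      field_simp
  have hsum : 2 * erriv ≤ err + 2 * thr + ∑ m, ∑ r : Option M, if above m r
      then (1 / Mc) * (phat (e m) r - (if r = some m then 1 else 0)) else 0 := by
    calc 2 * erriv = _ := mul_sum ..
      _ ≤ _ := sum_le_sum fun m _ => hprompt m
      _ = _ := by
        rw [sum_add_distrib, sum_add_distrib, sum_const, card_univ, nsmul_eq_mul, ← mul_assoc,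
          mul_one_div_cancel hMc0, one_mul]
  have hδ : (∑ m, ∑ r : Option M, if above m r
      then (1 / Mc) * (phat (e m) r - (if r = some m then 1 else 0)) else 0) ≤ δ := le_abs_self _
  have hthr2 : 2 / (Mc - 1) = 2 * thr := by simp only [thr]; ring
  linarith

/-- (Observation 2 of the paper: hallucination from computational
hardness.)  Prompts are ciphertexts `e m` (with `μ` uniform over `e(M)`); for prompt
`e m` the valid responses are `{m, IDK}` and the errors are `M \ {m}`.  If the
thresholded classifier `f̂` induced by the base model `phat` does not `β`-break the
encryption scheme, i.e. `erriv > (1−β)/2`, then the base model outputs erroneous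
decryptions with probability at least `1 − β − 2/(|M|−1) − δ`. -/
theorem stmt16 {M H : Type} [Fintype M] [DecidableEq M]
    (hM : 3 ≤ Fintype.card M)
    (e : M → H) (he : Function.Injective e)
    (β : ℝ) (hβ : β ∈ Set.Icc (0 : ℝ) 1)
    -- base model: conditional distributions over responses M ∪ {IDK} given a ciphertext
    (phat : H → Option M → ℝ)
    (hphat0 : ∀ h r, 0 ≤ phat h r)
    (hphat1 : ∀ h, ∑ r : Option M, phat h r = 1) :
    let Mc : ℝ := (Fintype.card M : ℝ)
    -- the classifier threshold 1/|E_c| = 1/(|M|−1)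
    let thr : ℝ := 1 / (Mc - 1)
    -- D: with prob 1/2, (e m, m) for uniform m; with prob 1/2, c = e m for uniform m
    -- and r uniform in E_c = M \ {m}; IDK never drawn under D
    let D : M → Option M → ℝ := fun m r =>
      r.elim 0 (fun x => if x = m then 1 / (2 * Mc) else 1 / (2 * Mc * (Mc - 1)))
    -- f labels (e m, r) + iff r is valid for the prompt, i.e. r ∈ {some m, IDK}
    let valid : M → Option M → Prop := fun m r => r = none ∨ r = some m
    -- f̂ labels (c, r) + iff phat(r|c) > 1/(|M|−1)
    let above : M → Option M → Prop := fun m r => phat (e m) r > thr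
    let erriv : ℝ := ∑ m, ∑ r : Option M,
      if (valid m r ∧ ¬ above m r) ∨ (¬ valid m r ∧ above m r) then D m r else 0
    -- probability of an erroneous decryption
    let err : ℝ := ∑ m, (1 / Mc) * ∑ x ∈ Finset.univ \ {m}, phat (e m) (some x)
    -- calibration gap δ = |phat(A) − p(A)|, where p draws m uniformly and outputs (e m, m)
    let δ : ℝ := |∑ m, ∑ r : Option M,
      if above m r
      then (1 / Mc) * (phat (e m) r - (if r = some m then 1 else 0)) else 0|
    -- f̂ does not β-break the scheme
    erriv > (1 - β) / 2 →
    err ≥ 1 - β - 2 / (Mc - 1) - δ :=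
  stmt16_general hM e β phat hphat0 hphat1
end

section
/- The memorize-or-uniform base model has error rate at most MM·L/(L+1): in the Arbitrary Facts model, define p̂ by p̂(IDK|c) = 1 − α_c for all c; p̂(a_c|c) = α_c for answered prompts c ∉ U; and p̂(r|c) = α_c/|R_c| for every r ∈ R_c when c ∈ U is unanswered. Then its generative error rate satisfies err = Σ_{c∈U} μ(c)·α_c·(|R_c|−1)/|R_c| ≤ MM·L/(L+1), where L := max_c (|R_c|−1). -/
open Finset

open scoped Classical

/-- In the Arbitrary Facts model, the memorize-or-uniform base model
(`phat(IDK|c) = 1 − α_c`; `phat(a_c|c) = α_c` for answered prompts; uniform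
`phat(r|c) = α_c/|R_c|` over `r ∈ R_c` for unanswered prompts) has generative error rate
`err = Σ_{c∈U} μ(c)·α_c·(|R_c|−1)/|R_c| ≤ MM·L/(L+1)`, where `L := max_c (|R_c|−1)`. -/
theorem stmt18 {C R : Type} [Fintype C] [Nonempty C] [Fintype R] [DecidableEq C]
    (μ : C → ℝ) (hμ0 : ∀ c, 0 ≤ μ c) (hμ1 : ∑ c, μ c = 1)
    (Rset : C → Finset R) (hR : ∀ c, 2 ≤ (Rset c).card)
    (α : C → ℝ) (hα : ∀ c, α c ∈ Set.Icc (0 : ℝ) 1)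
    -- the (randomly chosen) correct answers
    (a : C → R) (ha : ∀ c, a c ∈ Rset c)
    -- the training data, consistent with the answers a
    (N : ℕ) (data : Fin N → C × Option R)
    (hconsistent : ∀ i, (data i).2 ≠ none → (data i).2 = some (a (data i).1)) :
    -- unanswered prompts
    let U : Finset C := Finset.univ.filter fun c => ∀ i, (data i).1 = c → (data i).2 = none
    -- the memorize-or-uniform base model
    let phat : C → Option R → ℝ := fun c r =>
      r.elim (1 - α c) (fun x =>
        if c ∈ U then (if x ∈ Rset c then α c / ((Rset c).card : ℝ) else 0)
        else (if x = a c then α c else 0))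
    -- generative error rate (E_c = R_c \ {a_c})
    let err : ℝ := ∑ c, μ c * ∑ x ∈ Rset c \ {a c}, phat c (some x)
    -- abstention-adjusted missing mass
    let MM : ℝ := ∑ c ∈ U, μ c * α c
    -- L = max_c |E_c| = max_c (|R_c| − 1)
    let L : ℕ := Finset.univ.sup' Finset.univ_nonempty (fun c => (Rset c).card - 1)
    err = (∑ c ∈ U, μ c * α c * (((Rset c).card : ℝ) - 1) / ((Rset c).card : ℝ)) ∧
    err ≤ MM * (L : ℝ) / ((L : ℝ) + 1) := by

  intro U phat err MM L
  have hcard : ∀ c, (0:ℝ) < ((Rset c).card : ℝ) := fun c => by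
    have := hR c; positivity
  have herr : err = ∑ c ∈ U, μ c * α c * (((Rset c).card : ℝ) - 1) / ((Rset c).card : ℝ) := by
    have key : ∀ c, μ c * ∑ x ∈ Rset c \ {a c}, phat c (some x)
        = if c ∈ U then μ c * α c * (((Rset c).card : ℝ) - 1) / ((Rset c).card : ℝ) else 0 := by
      intro c
      by_cases hc : c ∈ U
      · simp only [hc, if_true, phat]
        have hsum : ∑ x ∈ Rset c \ {a c}, (if x ∈ Rset c then α c / ((Rset c).card : ℝ) else 0)
            = (((Rset c).card : ℝ) - 1) * (α c / ((Rset c).card : ℝ)) := by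
          rw [Finset.sum_congr rfl (fun x hx => by
            rw [if_pos (Finset.mem_sdiff.mp hx).1]), Finset.sum_const, nsmul_eq_mul]
          congr 1
          rw [Finset.card_sdiff_of_subset (by simpa using ha c), Finset.card_singleton]
          have := hR c
          rw [Nat.cast_sub (by omega : 1 ≤ (Rset c).card), Nat.cast_one]
        simp only [Option.elim]
        rw [hsum]; ring
      · simp only [hc, if_false, phat, Option.elim]
        have : ∑ x ∈ Rset c \ {a c}, (if x = a c then α c else 0) = 0 := by
          apply Finset.sum_eq_zero
          intro x hx
          rw [if_neg (by simpa using (Finset.mem_sdiff.mp hx).2)]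
        rw [this, mul_zero]
    calc err = ∑ c, (if c ∈ U then μ c * α c * (((Rset c).card : ℝ) - 1) / ((Rset c).card : ℝ) else 0) := by
          exact Finset.sum_congr rfl (fun c _ => key c)
      _ = _ := by rw [Finset.sum_ite_mem, Finset.univ_inter]
  refine ⟨herr, ?_⟩
  rw [herr]
  have hL1 : (0:ℝ) < (L:ℝ) + 1 := by positivity
  have hbound : ∀ c ∈ U, μ c * α c * (((Rset c).card : ℝ) - 1) / ((Rset c).card : ℝ)
      ≤ μ c * α c * ((L:ℝ) / ((L:ℝ)+1)) := by
    intro c _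
    have hμα : 0 ≤ μ c * α c := mul_nonneg (hμ0 c) (hα c).1
    have hLc : (Rset c).card - 1 ≤ L := Finset.le_sup' (fun c => (Rset c).card - 1) (Finset.mem_univ c)
    have hcast : ((Rset c).card : ℝ) - 1 ≤ (L:ℝ) := by
      have h1 : 1 ≤ (Rset c).card := by have := hR c; omega
      have : (((Rset c).card - 1 : ℕ) : ℝ) ≤ (L:ℝ) := by exact_mod_cast hLc
      rwa [Nat.cast_sub h1, Nat.cast_one] at this
    have hfrac : (((Rset c).card : ℝ) - 1) / ((Rset c).card : ℝ) ≤ (L:ℝ) / ((L:ℝ)+1) := by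
      rw [div_le_div_iff₀ (hcard c) hL1]
      have h1 : 1 ≤ ((Rset c).card : ℝ) := by
        have := hR c; exact_mod_cast by omega
      nlinarith [hcard c]
    calc μ c * α c * (((Rset c).card : ℝ) - 1) / ((Rset c).card : ℝ)
        = μ c * α c * ((((Rset c).card : ℝ) - 1) / ((Rset c).card : ℝ)) := by ring
      _ ≤ μ c * α c * ((L:ℝ) / ((L:ℝ)+1)) := mul_le_mul_of_nonneg_left hfrac hμα
  calc ∑ c ∈ U, μ c * α c * (((Rset c).card : ℝ) - 1) / ((Rset c).card : ℝ)
      ≤ ∑ c ∈ U, μ c * α c * ((L:ℝ) / ((L:ℝ)+1)) := Finset.sum_le_sum hbound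
    _ = MM * (L:ℝ) / ((L:ℝ)+1) := by rw [← Finset.sum_mul]; ring
end

section
/- The memorize-or-uniform base model is perfectly calibrated at every threshold: in the Arbitrary Facts model, define p̂ by p̂(IDK|c) = 1 − α_c for all c; p̂(a_c|c) = α_c for answered prompts c ∉ U; and p̂(r|c) = α_c/|R_c| for every r ∈ R_c when c ∈ U is unanswered. Then for every z ∈ [0,1], δ_z := |Pr_{(c,r)∼p̂}[p̂(r|c) > z] − Pr_{(c,r)∼p}[p̂(r|c) > z]| = 0. -/
open Finset

open scoped Classical

/-- In the Arbitrary Facts model, the memorize-or-uniform base model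
(`phat(IDK|c) = 1 − α_c`; `phat(a_c|c) = α_c` for answered prompts; uniform
`phat(r|c) = α_c/|R_c|` over `r ∈ R_c` for unanswered prompts) is perfectly calibrated at
every threshold: `δ_z = 0` for all `z ∈ [0,1]`. -/
theorem stmt19 {C R : Type} [Fintype C] [Nonempty C] [Fintype R] [DecidableEq C]
    (μ : C → ℝ) (hμ0 : ∀ c, 0 ≤ μ c) (hμ1 : ∑ c, μ c = 1)
    (Rset : C → Finset R) (hR : ∀ c, 2 ≤ (Rset c).card)
    (α : C → ℝ) (hα : ∀ c, α c ∈ Set.Icc (0 : ℝ) 1)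
    -- the (randomly chosen) correct answers
    (a : C → R) (ha : ∀ c, a c ∈ Rset c)
    -- the training data, consistent with the answers a
    (N : ℕ) (data : Fin N → C × Option R)
    (hconsistent : ∀ i, (data i).2 ≠ none → (data i).2 = some (a (data i).1)) :
    -- training conditional: p(a_c | c) = α_c, p(IDK | c) = 1 − α_c
    let pcond : C → Option R → ℝ := fun c r =>
      r.elim (1 - α c) (fun x => if x = a c then α c else 0)
    -- unanswered prompts
    let U : Finset C := Finset.univ.filter fun c => ∀ i, (data i).1 = c → (data i).2 = none
    -- the memorize-or-uniform base model
    let phat : C → Option R → ℝ := fun c r =>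
      r.elim (1 - α c) (fun x =>
        if c ∈ U then (if x ∈ Rset c then α c / ((Rset c).card : ℝ) else 0)
        else (if x = a c then α c else 0))
    -- calibration gap at threshold z:
    -- δ_z = |Pr_{(c,r)∼phat}[phat(r|c) > z] − Pr_{(c,r)∼p}[phat(r|c) > z]|
    let δz : ℝ → ℝ := fun z =>
      |∑ c, ∑ r : Option R, if phat c r > z then μ c * (phat c r - pcond c r) else 0|
    ∀ z ∈ Set.Icc (0 : ℝ) 1, δz z = 0 := by
  intro pcond U phat δz z hz
  have hz0 : (0:ℝ) ≤ z := hz.1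
  simp only [δz, abs_eq_zero]
  apply Finset.sum_eq_zero
  intro c _
  rw [Fintype.sum_option]
  have hnone : (if phat c none > z then μ c * (phat c none - pcond c none) else 0) = 0 := by
    simp [phat, pcond]
  rw [hnone, zero_add]
  by_cases hU : c ∈ U
  · have hph : ∀ x : R, phat c (some x)
        = if x ∈ Rset c then α c / ((Rset c).card : ℝ) else 0 := by
      intro x; simp [phat, hU]
    have hvanish : ∀ x ∈ (Finset.univ : Finset R), x ∉ Rset c →
        (if phat c (some x) > z then μ c * (phat c (some x) - pcond c (some x)) else 0) = 0 := by
      intro x _ hx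
      rw [hph x, if_neg hx]
      have : ¬ ((0:ℝ) > z) := not_lt.mpr hz0
      rw [if_neg this]
    rw [← Finset.sum_subset (Finset.subset_univ (Rset c)) hvanish]
    have hcongr : ∀ x ∈ Rset c,
        (if phat c (some x) > z then μ c * (phat c (some x) - pcond c (some x)) else 0)
        = (if α c / ((Rset c).card : ℝ) > z then
            μ c * (α c / ((Rset c).card : ℝ) - pcond c (some x)) else 0) := by
      intro x hx
      rw [hph x, if_pos hx]
    rw [Finset.sum_congr rfl hcongr]
    by_cases hgt : α c / ((Rset c).card : ℝ) > z
    · simp only [if_pos hgt]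
      rw [← Finset.mul_sum, Finset.sum_sub_distrib, Finset.sum_const]
      have hcard : ((Rset c).card : ℝ) ≠ 0 := by
        have := hR c; positivity
      have h1 : (Rset c).card • (α c / ((Rset c).card : ℝ)) = α c := by
        rw [nsmul_eq_mul, mul_div_cancel₀]
        exact hcard
      have h2 : ∑ x ∈ Rset c, pcond c (some x) = α c := by
        simp only [pcond, Option.elim]
        rw [Finset.sum_ite_eq' (Rset c) (a c) (fun _ => α c)]
        rw [if_pos (ha c)]
      rw [h1, h2, sub_self, mul_zero]
    · simp only [if_neg hgt, Finset.sum_const_zero]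
  · apply Finset.sum_eq_zero
    intro x _
    have : phat c (some x) = pcond c (some x) := by simp [phat, pcond, hU]
    rw [this, sub_self, mul_zero]; simp
end
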